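/- arXiv:1409.0299 — 8 statements merged into one kernel-verified Lean document; each statement's English description precedes it below -/
import Mathlib

section
/- Let A ⊆ B be an extension of commutative rings and M ⊆ N an extension of positive commutative cancellative torsion-free monoids. If the canonical group homomorphism θ : 𝓘(A,B) → 𝓘(A[M],B[N]), sending an invertible A-submodule I of B to the A[M]-submodule of B[N] generated by I, is an isomorphism, then B is reduced or M = N. -/
/-!
If `b ≠ 0` with `b² = 0` and `n ∈ N \ M`, then `u = 1 + b Xⁿ` is a unit of `B[N]`, so `A[M] u` is
an invertible `A[M]`-submodule of `B[N]`. Every submodule in the image of `θ` is generated by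
constants, hence consists of elements supported on `M`; but the coefficient of `u` at `n` is `b`.
So `θ` is not surjective.
-/

open scoped Classical

noncomputable section

/-- `A` is subintegrally closed in its ambient ring `B`:
every `b : B` with `b² ∈ A` and `b³ ∈ A` lies in `A`. -/
def Subring.IsSubintegrallyClosedIn {B : Type*} [CommRing B] (A : Subring B) : Prop :=
  ∀ b : B, b ^ 2 ∈ A → b ^ 3 ∈ A → b ∈ A

/-- `M` is subintegrally closed in its ambient monoid `N`:
every `x : N` with `x² ∈ M` and `x³ ∈ M` lies in `M`. -/
def Submonoid.IsSubintegrallyClosedIn {N : Type*} [CommMonoid N] (M : Submonoid N) : Prop :=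
  ∀ x : N, x ^ 2 ∈ M → x ^ 3 ∈ M → x ∈ M

/-- A commutative monoid is torsion-free. -/
def MulTorsionFree (N : Type*) [CommMonoid N] : Prop :=
  ∀ (x y : N) (n : ℕ), n ≠ 0 → x ^ n = y ^ n → x = y

/-- A commutative monoid is positive if its only unit is the identity. -/
def IsPositiveMonoid (N : Type*) [CommMonoid N] : Prop :=
  ∀ x : N, IsUnit x → x = 1

/-- The subring `A[M]` of the monoid algebra `B[N]`, for a subring `A ⊆ B` and a submonoid
`M ⊆ N`: the subring generated by the elements `a·m` (`a ∈ A`, `m ∈ M`); equivalently, the set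
of elements of `B[N]` supported on `M` with all coefficients in `A`. -/
def monoidAlgebraSubring {B : Type*} [CommRing B] {N : Type*} [CommMonoid N]
    (A : Subring B) (M : Submonoid N) : Subring (MonoidAlgebra B N) :=
  Subring.closure {x | ∃ a ∈ A, ∃ m ∈ M, x = MonoidAlgebra.single m a}

/-- The canonical group homomorphism `θ : 𝓘(A,B) → 𝓘(A[M],B[N])`, sending an invertible
`A`-submodule `I` of `B` to the `A[M]`-submodule of `B[N]` generated by (the image of) `I`,
is an isomorphism of groups.  This is phrased as: there is a group isomorphism
`𝓘(A,B) ≃* 𝓘(A[M],B[N])` whose underlying map is the canonical one. -/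
def ThetaIsIso {B : Type*} [CommRing B] {N : Type*} [CancelCommMonoid N]
    (A : Subring B) (M : Submonoid N) : Prop :=
  ∃ e : (Submodule A B)ˣ ≃* (Submodule (monoidAlgebraSubring A M) (MonoidAlgebra B N))ˣ,
    ∀ I : (Submodule A B)ˣ,
      (e I : Submodule (monoidAlgebraSubring A M) (MonoidAlgebra B N)) =
        Submodule.span (monoidAlgebraSubring A M)
          (⇑(MonoidAlgebra.singleOneRingHom : B →+* MonoidAlgebra B N) ''
            ((I : Submodule A B) : Set B))

open MonoidAlgebra

section Supported

variable {B : Type*} [Ring B] {N : Type*}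

theorem MonoidAlgebra.single_mem_supported {s : Set N} {m : N} (hm : m ∈ s) (b : B) :
    single m b ∈ supported ℤ B s := by
  rw [mem_supported, coeff_single]
  exact Finsupp.single_mem_supported ℤ b hm

variable [CommMonoid N]

def MonoidAlgebra.supportedSubring (M : Submonoid N) : Subring (MonoidAlgebra B N) where
  __ := (supported ℤ B (M : Set N)).toAddSubgroup
  one_mem' := single_mem_supported M.one_mem 1
  mul_mem' {x y} hx hy := by
    intro k hk
    obtain ⟨p, hp, q, hq, rfl⟩ := Finset.mem_mul.mp (support_coeff_mul_subset x y hk)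
    exact M.mul_mem (hx hp) (hy hq)

theorem MonoidAlgebra.mem_supportedSubring {M : Submonoid N} {x : MonoidAlgebra B N} :
    x ∈ supportedSubring M ↔ ↑x.coeff.support ⊆ (M : Set N) :=
  Iff.rfl

theorem MonoidAlgebra.mem_of_one_add_single_mem_supportedSubring {M : Submonoid N} {n : N}
    {b : B} (hb : b ≠ 0) (h : 1 + single n b ∈ supportedSubring M) : n ∈ M := by
  by_cases hn : n = 1
  · exact hn ▸ M.one_mem
  apply mem_supportedSubring.mp h
  simp [one_def, Ne.symm hn, hb]

end Supported

theorem monoidAlgebraSubring_le_supportedSubring {B : Type*} [CommRing B] {N : Type*}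
    [CommMonoid N] (A : Subring B) (M : Submonoid N) :
    monoidAlgebraSubring A M ≤ supportedSubring M :=
  Subring.closure_le.mpr <| by
    rintro _ ⟨a, -, m, hm, rfl⟩
    exact single_mem_supported hm a

theorem Subring.coe_span_subset {T : Type*} [Ring T] {S R : Subring T} (hSR : S ≤ R)
    {s : Set T} (hs : s ⊆ R) : (Submodule.span S s : Set T) ⊆ R := by
  intro x hx
  induction hx using Submodule.span_induction with
  | mem x hx => exact hs hx
  | zero => exact R.zero_mem
  | add x y _ _ hx hy => exact R.add_mem hx hy
  | smul a x _ hx => exact R.mul_mem (hSR a.2) hx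

theorem ThetaIsIso.mem_supportedSubring_of_isUnit {B : Type*} [CommRing B] {N : Type*}
    [CancelCommMonoid N] {A : Subring B} {M : Submonoid N} (h : ThetaIsIso A M)
    {u : MonoidAlgebra B N} (hu : IsUnit u) : u ∈ supportedSubring M := by
  obtain ⟨e, he⟩ := h
  obtain ⟨I, hI⟩ := e.surjective
    (Units.map (Submodule.spanSingleton (monoidAlgebraSubring A M)).toMonoidHom hu.unit)
  have hu_mem : u ∈ Submodule.span (monoidAlgebraSubring A M)
      (singleOneRingHom '' ((I : Submodule A B) : Set B)) := by
    rw [← he, hI]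
    exact Submodule.mem_span_singleton_self u
  refine Subring.coe_span_subset (monoidAlgebraSubring_le_supportedSubring A M) ?_ hu_mem
  rintro _ ⟨c, -, rfl⟩
  exact single_mem_supported M.one_mem c

theorem isReduced_or_eq_top_of_theta_isIso_general
    {B : Type*} [CommRing B] (A : Subring B)
    {N : Type*} [CancelCommMonoid N] (M : Submonoid N)
    (h : ThetaIsIso A M) :
    IsReduced B ∨ M = ⊤ := by
  refine or_iff_not_imp_left.mpr fun hred => top_unique fun n _ => ?_
  obtain ⟨b, hb2, hb⟩ : ∃ b : B, b ^ 2 = 0 ∧ b ≠ 0 := by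
    simpa [isReduced_iff_pow_one_lt 2 one_lt_two] using hred
  have hu : IsUnit (1 + single n b) :=
    IsNilpotent.isUnit_one_add ⟨2, by rw [single_pow, hb2, single_zero]⟩
  exact mem_of_one_add_single_mem_supportedSubring hb (h.mem_supportedSubring_of_isUnit hu)

/-- **Sarwar, Theorem 1.2(d)(iii).**  If the canonical map `θ : 𝓘(A,B) → 𝓘(A[M],B[N])` is an
isomorphism, then `B` is reduced or `M = N`. -/
theorem isReduced_or_eq_top_of_theta_isIso
    {B : Type*} [CommRing B] (A : Subring B)
    {N : Type*} [CancelCommMonoid N] (M : Submonoid N)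
    (htf : MulTorsionFree N) (hpos : IsPositiveMonoid N)
    (h : ThetaIsIso A M) :
    IsReduced B ∨ M = ⊤ :=
  isReduced_or_eq_top_of_theta_isIso_general A M h
end
end

section
/- Let A ⊆ B be an extension of commutative rings and M ⊆ N an extension of positive commutative cancellative torsion-free monoids with N affine (finitely generated), such that A is subintegrally closed in B and M is subintegrally closed in N. If A[M] is subintegrally closed in B[N], then B is reduced or M = N. -/
open scoped Classical

noncomputable section

/-!
If `c ∈ B` is a nonzero element with `c² = 0` and `n ∈ N \ M`, then the monomial `c·n` of `B[N]`
has vanishing square and cube, so it would lie in `A[M]`; but every element of `A[M]` is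
supported on `M`.
-/

theorem Subring.IsSubintegrallyClosedIn.mem_of_sq_eq_zero {S : Type*} [CommRing S]
    {R : Subring S} (hR : R.IsSubintegrallyClosedIn) {x : S} (hx : x ^ 2 = 0) : x ∈ R := by
  have hx3 : x ^ 3 = 0 := by rw [pow_succ, hx, zero_mul]
  exact hR x (hx ▸ R.zero_mem) (hx3 ▸ R.zero_mem)

section MonoidAlgebraSubring

variable {B : Type*} [CommRing B] {N : Type*} [CommMonoid N] {A : Subring B} {M : Submonoid N}

theorem monoidAlgebraSubring_le_range_mapDomainRingHom :
    monoidAlgebraSubring A M ≤ (MonoidAlgebra.mapDomainRingHom B M.subtype).range := by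
  refine Subring.closure_le.mpr ?_
  rintro _ ⟨a, -, m, hm, rfl⟩
  exact ⟨MonoidAlgebra.single ⟨m, hm⟩ a, by simp [MonoidAlgebra.mapDomainRingHom]⟩

theorem coeff_eq_zero_of_mem_monoidAlgebraSubring {x : MonoidAlgebra B N}
    (hx : x ∈ monoidAlgebraSubring A M) {n : N} (hn : n ∉ M) : x.coeff n = 0 := by
  obtain ⟨y, rfl⟩ := monoidAlgebraSubring_le_range_mapDomainRingHom hx
  refine Finsupp.mapDomain_of_notMem_range y.coeff n ?_
  rintro ⟨m, rfl⟩
  exact hn m.2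

end MonoidAlgebraSubring

theorem isReduced_or_eq_top_of_monoidAlgebra_subintegrallyClosed_general
    {B : Type*} [CommRing B] (A : Subring B)
    {N : Type*} [CancelCommMonoid N] (M : Submonoid N)
    (hAM : (monoidAlgebraSubring A M).IsSubintegrallyClosedIn) :
    IsReduced B ∨ M = ⊤ := by
  refine or_iff_not_imp_right.mpr fun hMN => ?_
  obtain ⟨n, hn⟩ : ∃ n, n ∉ M := by
    simpa only [Submonoid.eq_top_iff', not_forall] using hMN
  refine (isReduced_iff_pow_one_lt 2 one_lt_two).mpr fun c hc => ?_
  have hsq : MonoidAlgebra.single n c ^ 2 = 0 := by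
    rw [MonoidAlgebra.single_pow, hc, MonoidAlgebra.single_zero]
  simpa using coeff_eq_zero_of_mem_monoidAlgebraSubring (hAM.mem_of_sq_eq_zero hsq) hn

/-- **Sarwar, Corollary 1.3(ii).**  If `A ⊆ B` is subintegrally closed, `M ⊆ N` is a
subintegrally closed extension of positive commutative cancellative torsion-free monoids with
`N` affine (finitely generated), and `A[M]` is subintegrally closed in `B[N]`, then `B` is
reduced or `M = N`. -/
theorem isReduced_or_eq_top_of_monoidAlgebra_subintegrallyClosed
    {B : Type*} [CommRing B] (A : Subring B)
    {N : Type*} [CancelCommMonoid N] (M : Submonoid N)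
    (htf : MulTorsionFree N) (hpos : IsPositiveMonoid N) (hfg : Monoid.FG N)
    (hA : A.IsSubintegrallyClosedIn) (hM : M.IsSubintegrallyClosedIn)
    (hAM : (monoidAlgebraSubring A M).IsSubintegrallyClosedIn) :
    IsReduced B ∨ M = ⊤ :=
  isReduced_or_eq_top_of_monoidAlgebra_subintegrallyClosed_general A M hAM
end
end

section
/- Let A ⊆ B be an extension of commutative rings and let r > 0 be an integer. Then A is subintegrally closed in B if and only if the polynomial ring A[X₁,…,X_r] is subintegrally closed in B[X₁,…,X_r]. -/
open scoped Classical

noncomputable section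

/-! `finSuccEquiv` reduces the forward direction to one variable. If `f², f³ ∈ A[X]` then
`f^k ∈ A[X]` for all `k ≥ 2`. Descending on `m`, let `g ∈ A[X]` be the part of `f` above degree
`m`; the coefficient of `X^(k m)` in `(f - g)^k` is `f_m^k`, and the binomial expansion puts it in
`A` for all `k ≥ m + 2`. In a subintegrally closed extension, `b^k ∈ A` for all large `k` forces
`b ∈ A`. The converse direction pulls back along `C : B → B[X₁,…,X_r]`. -/

open Filter Polynomial

theorem pow_mem_of_sq_mem_of_cube_mem {M S : Type*} [Monoid M] [SetLike S M]
    [SubmonoidClass S M] {A : S} {b : M} (h2 : b ^ 2 ∈ A) (h3 : b ^ 3 ∈ A) {k : ℕ}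
    (hk : 2 ≤ k) : b ^ k ∈ A := by
  obtain ⟨j, rfl | rfl⟩ := Nat.even_or_odd' k
  · rw [pow_mul]
    exact pow_mem h2 j
  · obtain ⟨i, rfl⟩ : ∃ i, j = i + 1 := ⟨j - 1, by omega⟩
    rw [show 2 * (i + 1) + 1 = 3 + 2 * i by ring, pow_add, pow_mul]
    exact mul_mem h3 (pow_mem h2 i)

theorem Polynomial.mem_range_mapRingHom_subtype_iff {B : Type*} [CommRing B] {A : Subring B}
    {p : B[X]} : p ∈ (mapRingHom A.subtype).range ↔ ∀ n, p.coeff n ∈ A := by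
  rw [mem_map_range, Subring.range_subtype]

theorem MvPolynomial.mem_range_map_subtype_iff {B σ : Type*} [CommRing B] {A : Subring B}
    {p : MvPolynomial σ B} :
    p ∈ (map A.subtype : MvPolynomial σ A →+* MvPolynomial σ B).range ↔ ∀ s, p.coeff s ∈ A := by
  constructor
  · rintro ⟨q, rfl⟩ s
    rw [coeff_map]
    exact (q.coeff s).2
  · intro hp
    refine ⟨∑ s ∈ p.support, monomial s ⟨p.coeff s, hp s⟩, ?_⟩
    simp only [map_sum, map_monomial]
    exact p.as_sum.symm

theorem Polynomial.coeff_pow_mem_of_forall_coeff_gt_mem {B : Type*} [CommRing B]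
    {A : Subring B} {f : B[X]} (hf : ∀ k, 2 ≤ k → f ^ k ∈ (mapRingHom A.subtype).range) {m : ℕ}
    (hm : ∀ j, m < j → f.coeff j ∈ A) {k : ℕ} (hk : m + 2 ≤ k) : f.coeff m ^ k ∈ A := by
  set S := (mapRingHom A.subtype).range
  set h : B[X] := PowerSeries.trunc (m + 1) (f : PowerSeries B)
  have h_coeff (j : ℕ) : h.coeff j = if j < m + 1 then f.coeff j else 0 := by
    simp [h, PowerSeries.coeff_trunc]
  set g := f - h
  have hg : g ∈ S := mem_range_mapRingHom_subtype_iff.2 fun j => by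
    by_cases hj : j < m + 1
    · simp [g, h_coeff, hj]
    · simpa [g, h_coeff, hj] using hm j (by omega)
  have hXg : X ^ (m + 1) ∣ g := X_pow_dvd_iff.2 fun d hd => by simp [g, h_coeff, hd]
  have h_top : (h ^ k).coeff (k * m) = f.coeff m ^ k := by
    rw [coeff_pow_of_natDegree_le (Nat.lt_succ_iff.1 (PowerSeries.natDegree_trunc_lt _ m)),
      h_coeff, if_pos m.lt_succ_self]
  rw [← h_top, show h = f + -g by simp [g], add_pow, finsetSum_coeff]
  refine sum_mem fun i _ => ?_
  rcases eq_or_ne i 1 with rfl | hi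
  · -- the only term not known to lie in `S`; it vanishes in degree `k * m` since `X ^ (m + 1) ∣ g`
    have hdvd : X ^ ((m + 1) * (k - 1)) ∣ f ^ 1 * (-g) ^ (k - 1) * (k.choose 1 : B[X]) := by
      rw [pow_mul]
      exact dvd_mul_of_dvd_left (dvd_mul_of_dvd_right (pow_dvd_pow_of_dvd (dvd_neg.2 hXg) _) _) _
    obtain ⟨l, rfl⟩ : ∃ l, k = l + m + 2 := ⟨k - m - 2, by omega⟩
    rw [X_pow_dvd_iff.1 hdvd _ (by rw [show l + m + 2 - 1 = l + m + 1 by omega]; nlinarith)]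
    exact A.zero_mem
  · have hfi : f ^ i ∈ S := by
      rcases Nat.lt_or_ge i 2 with hi2 | hi2
      · obtain rfl : i = 0 := by omega
        simp [S.one_mem]
      · exact hf i hi2
    exact mem_range_mapRingHom_subtype_iff.1
      (mul_mem (mul_mem hfi (pow_mem (neg_mem hg) _)) (natCast_mem S _)) _

namespace MvPolynomial

variable {B : Type*} [CommRing B] (A : Subring B)

theorem comap_C_range_map_subtype (σ : Type*) :
    (map A.subtype : MvPolynomial σ A →+* MvPolynomial σ B).range.comap C = A := by
  ext b
  rw [Subring.mem_comap, mem_range_map_subtype_iff]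
  refine ⟨fun h => by simpa using h 0, fun hb s => ?_⟩
  rw [coeff_C]
  split_ifs
  exacts [hb, A.zero_mem]

theorem range_map_subtype_fin_zero :
    (map A.subtype : MvPolynomial (Fin 0) A →+* MvPolynomial (Fin 0) B).range =
      A.comap constantCoeff := by
  ext p
  rw [Subring.mem_comap, mem_range_map_subtype_iff, constantCoeff_eq]
  exact ⟨fun h => h 0, fun h s => Subsingleton.elim s 0 ▸ h⟩

theorem range_map_subtype_fin_succ (n : ℕ) :
    (map A.subtype : MvPolynomial (Fin (n + 1)) A →+* MvPolynomial (Fin (n + 1)) B).range =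
      (mapRingHom (map A.subtype : MvPolynomial (Fin n) A →+* _).range.subtype).range.comap
        (finSuccEquiv B n : MvPolynomial (Fin (n + 1)) B →+* (MvPolynomial (Fin n) B)[X]) := by
  ext p
  simp only [Subring.mem_comap, mem_range_mapRingHom_subtype_iff, mem_range_map_subtype_iff,
    RingHom.coe_coe, finSuccEquiv_coeff_coeff]
  exact ⟨fun h i s => h _, fun h s => by simpa using h (s 0) s.tail⟩

end MvPolynomial

namespace Subring.IsSubintegrallyClosedIn

variable {B : Type*} [CommRing B] {A : Subring B}

theorem comap {C : Type*} [CommRing C] {A : Subring C} (hA : A.IsSubintegrallyClosedIn)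
    (f : B →+* C) : (A.comap f).IsSubintegrallyClosedIn := fun b h2 h3 =>
  hA (f b) (by simpa using h2) (by simpa using h3)

theorem mem_of_eventually_pow_mem (hA : A.IsSubintegrallyClosedIn) {b : B}
    (h : ∀ᶠ k in atTop, b ^ k ∈ A) : b ∈ A := by
  obtain ⟨K, hK⟩ := eventually_atTop.1 h
  induction K with
  | zero => simpa using hK 1 (by omega)
  | succ K ih =>
    refine ih fun k hk => (Nat.eq_or_lt_of_le hk).elim (fun hkK => ?_) (hK k)
    subst hkK
    rcases Nat.eq_zero_or_pos K with rfl | hK0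
    · simp [A.one_mem]
    · exact hA _ (by rw [← pow_mul]; exact hK _ (by omega))
        (by rw [← pow_mul]; exact hK _ (by omega))

theorem polynomial (hA : A.IsSubintegrallyClosedIn) :
    (mapRingHom A.subtype).range.IsSubintegrallyClosedIn := by
  intro f h2 h3
  have hpow (k : ℕ) (hk : 2 ≤ k) : f ^ k ∈ (mapRingHom A.subtype).range :=
    pow_mem_of_sq_mem_of_cube_mem h2 h3 hk
  have h_coeff (d : ℕ) : ∀ m, f.natDegree < m + d → f.coeff m ∈ A := by
    induction d with
    | zero =>
      intro m hm
      rw [coeff_eq_zero_of_natDegree_lt (by omega)]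
      exact A.zero_mem
    | succ d ih =>
      intro m hm
      exact hA.mem_of_eventually_pow_mem <| eventually_atTop.2 ⟨m + 2, fun k hk =>
        coeff_pow_mem_of_forall_coeff_gt_mem hpow (fun j hj => ih j (by omega)) hk⟩
  exact mem_range_mapRingHom_subtype_iff.2 fun m => h_coeff (f.natDegree + 1) m (by omega)

theorem mvPolynomial (hA : A.IsSubintegrallyClosedIn) :
    ∀ n : ℕ, (MvPolynomial.map A.subtype :
      MvPolynomial (Fin n) A →+* MvPolynomial (Fin n) B).range.IsSubintegrallyClosedIn
  | 0 => MvPolynomial.range_map_subtype_fin_zero A ▸ hA.comap _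
  | n + 1 => MvPolynomial.range_map_subtype_fin_succ A n ▸ (hA.mvPolynomial n).polynomial.comap _

end Subring.IsSubintegrallyClosedIn

theorem subintegrallyClosed_iff_mvPolynomial_general
    {B : Type*} [CommRing B] (A : Subring B) (r : ℕ) :
    A.IsSubintegrallyClosedIn ↔
      ((MvPolynomial.map (A.subtype) :
          MvPolynomial (Fin r) A →+* MvPolynomial (Fin r) B).range).IsSubintegrallyClosedIn :=
  ⟨fun hA => hA.mvPolynomial r,
    fun h => MvPolynomial.comap_C_range_map_subtype A (Fin r) ▸ h.comap MvPolynomial.C⟩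

/-- **Sarwar, Lemma 2.2 (Sadhu–Singh).**  For an extension of commutative rings `A ⊆ B` and an
integer `r > 0`, `A` is subintegrally closed in `B` if and only if the polynomial ring
`A[X₁,…,X_r]` is subintegrally closed in `B[X₁,…,X_r]`. -/
theorem subintegrallyClosed_iff_mvPolynomial
    {B : Type*} [CommRing B] (A : Subring B) (r : ℕ) (hr : 0 < r) :
    A.IsSubintegrallyClosedIn ↔
      ((MvPolynomial.map (A.subtype) :
          MvPolynomial (Fin r) A →+* MvPolynomial (Fin r) B).range).IsSubintegrallyClosedIn :=
  subintegrallyClosed_iff_mvPolynomial_general A r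
end
end

section
/- Let A ⊆ B be an extension of reduced commutative rings and M ⊆ N an extension of commutative cancellative torsion-free monoids. Then the subintegral closure of A[M] in B[N] equals (⁺A)[N ∩ sn(M)], where ⁺A is the subintegral closure of A in B, sn(M) is the subintegral closure of M in its group of fractions gp(M), and the intersection N ∩ sn(M) is taken inside gp(N). -/
/-!
`⁺A[N ∩ sn(M)]` lies in the subintegral closure of `A[M]` because the coefficients `α` with
`α·1` in the closure form a subintegrally closed subring of `B` containing `A`, while every
`m ∈ sn(M)` has all its high powers in `M`, and an element of `B[N]` all of whose high powers
lie in the closure lies in the closure.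

Conversely it suffices that `T = A'[M']`, with `A' = ⁺A` and `M' = N ∩ sn(M)`, is
subintegrally closed in `B[N]`. Let `f ∈ B[N]` with `f², f³ ∈ T`. As `G` is torsion-free there
is an additive `φ : G → ℚ` injective on the support of `f`; let `h = c·g` be the term of `f` of
largest `φ`-degree. Then `c²g²` and `c³g³` are the top terms of `f²` and `f³`, nonzero as `B`
is reduced, so `c ∈ A'`, `g ∈ M'` and `h ∈ T`. Modulo `T`, `hⁿf` agrees with `(h - f)ⁿf`,
whose degree drops below every exponent of `hⁿf` for large `n`; hence `hⁿf ∈ T`. Finally,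
once `hᵏ⁺¹f ∈ T`, the square and cube of `hᵏ(f - h)` lie in `T`, and it has smaller support
than `f`, so by induction on the support `hᵏ(f - h) ∈ T`, hence `hᵏf ∈ T`; descending in `k`
gives `f ∈ T`.
-/

open scoped Classical

noncomputable section

/-- The subintegral closure of `A` in an intermediate ring `C` (for `A ⊆ C ⊆ B`): the smallest
subring `T` of `B` containing `A` such that every `b ∈ C` with `b² ∈ T` and `b³ ∈ T` lies in
`T`. -/
def Subring.subintegralClosureIn {B : Type*} [CommRing B] (A C : Subring B) : Subring B :=
  sInf {T : Subring B | A ≤ T ∧ ∀ b ∈ C, b ^ 2 ∈ T → b ^ 3 ∈ T → b ∈ T}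

/-- The subintegral closure `⁺A` of `A` in `B`: the smallest subring `T` of `B` containing `A`
such that every `b : B` with `b² ∈ T` and `b³ ∈ T` lies in `T`. -/
def Subring.subintegralClosure {B : Type*} [CommRing B] (A : Subring B) : Subring B :=
  A.subintegralClosureIn ⊤

/-- The subintegral closure of `M` in an intermediate monoid `C` (for `M ⊆ C ⊆ G`): the
smallest submonoid `T` of `G` containing `M` such that every `x ∈ C` with `x² ∈ T` and
`x³ ∈ T` lies in `T`. -/
def Submonoid.subintegralClosureIn {G : Type*} [CommMonoid G] (M C : Submonoid G) : Submonoid G :=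
  sInf {T : Submonoid G | M ≤ T ∧ ∀ x ∈ C, x ^ 2 ∈ T → x ^ 3 ∈ T → x ∈ T}

section MonoidAlgebraSubring

variable {B : Type*} [CommRing B] {G : Type*} [CommMonoid G]

def coeffwiseSubring (A : Subring B) (S : Submonoid G) : Subring (MonoidAlgebra B G) where
  carrier := {x | (∀ w, x.coeff w ∈ A) ∧ ∀ w ∈ x.coeff.support, w ∈ S}
  zero_mem' := ⟨fun _ => zero_mem A, by simp⟩
  one_mem' := by
    refine ⟨fun w => ?_, fun w hw => ?_⟩
    · rw [MonoidAlgebra.one_def, MonoidAlgebra.coeff_single, Finsupp.single_apply]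
      split_ifs
      exacts [one_mem A, zero_mem A]
    · rw [Finset.mem_singleton.1 (MonoidAlgebra.support_coeff_one_subset hw)]
      exact one_mem S
  add_mem' := fun ⟨hxA, hxS⟩ ⟨hyA, hyS⟩ =>
    ⟨fun w => add_mem (hxA w) (hyA w), fun w hw =>
      (Finset.mem_union.1 (Finsupp.support_add hw)).elim (hxS w) (hyS w)⟩
  neg_mem' := fun ⟨hxA, hxS⟩ =>
    ⟨fun w => neg_mem (hxA w), fun w hw => hxS w (by simpa [MonoidAlgebra.coeff_neg] using hw)⟩
  mul_mem' := by
    rintro x y ⟨hxA, hxS⟩ ⟨hyA, hyS⟩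
    refine ⟨fun w => ?_, fun w hw => ?_⟩
    · rw [MonoidAlgebra.coeff_mul]
      refine AddSubmonoidClass.finsuppSum_mem _ _ _ fun a _ =>
        AddSubmonoidClass.finsuppSum_mem _ _ _ fun b _ => ?_
      split_ifs
      exacts [mul_mem (hxA a) (hyA b), zero_mem A]
    · obtain ⟨a, ha, b, hb, rfl⟩ := Finset.mem_mul.1 (MonoidAlgebra.support_coeff_mul_subset x y hw)
      exact mul_mem (hxS a ha) (hyS b hb)

theorem mem_monoidAlgebraSubring {A : Subring B} {S : Submonoid G} {x : MonoidAlgebra B G} :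
    x ∈ monoidAlgebraSubring A S ↔ (∀ w, x.coeff w ∈ A) ∧ ∀ w ∈ x.coeff.support, w ∈ S := by
  suffices monoidAlgebraSubring A S = coeffwiseSubring A S by rw [this]; rfl
  refine le_antisymm (Subring.closure_le.2 ?_) fun x ⟨hxA, hxS⟩ => ?_
  · rintro _ ⟨a, ha, m, hm, rfl⟩
    refine ⟨fun w => ?_, fun w hw => ?_⟩
    · rw [MonoidAlgebra.coeff_single, Finsupp.single_apply]
      split_ifs
      exacts [ha, zero_mem A]
    · rwa [Finset.mem_singleton.1 (Finsupp.support_single_subset hw)]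
  · rw [← MonoidAlgebra.sum_coeff_single x]
    exact AddSubmonoidClass.finsuppSum_mem _ _ _ fun w hw =>
      Subring.subset_closure ⟨_, hxA w, w, hxS w (Finsupp.mem_support_iff.2 hw), rfl⟩

theorem single_mem_monoidAlgebraSubring {A : Subring B} {S : Submonoid G} {m : G} {a : B}
    (ha : a ∈ A) (hm : m ∈ S) : MonoidAlgebra.single m a ∈ monoidAlgebraSubring A S :=
  Subring.subset_closure ⟨a, ha, m, hm, rfl⟩

theorem monoidAlgebraSubring_mono {A A' : Subring B} {S S' : Submonoid G} (hA : A ≤ A')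
    (hS : S ≤ S') : monoidAlgebraSubring A S ≤ monoidAlgebraSubring A' S' :=
  Subring.closure_mono fun _ ⟨a, ha, m, hm, hx⟩ => ⟨a, hA ha, m, hS hm, hx⟩

theorem mem_monoidAlgebraSubring_of_coeff_eq {A : Subring B} {S : Submonoid G}
    {x W : MonoidAlgebra B G} (hW : W ∈ monoidAlgebraSubring A S)
    (hxW : ∀ w ∈ x.coeff.support, x.coeff w = W.coeff w) : x ∈ monoidAlgebraSubring A S := by
  rw [mem_monoidAlgebraSubring] at hW ⊢
  refine ⟨fun w => ?_, fun w hw => hW.2 w ?_⟩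
  · by_cases hw : w ∈ x.coeff.support
    · exact hxW w hw ▸ hW.1 w
    · exact Finsupp.notMem_support_iff.1 hw ▸ zero_mem A
  · rw [Finsupp.mem_support_iff, ← hxW w hw]
    exact Finsupp.mem_support_iff.1 hw

end MonoidAlgebraSubring

namespace Subring

variable {R : Type*} [CommRing R]

theorem le_subintegralClosureIn (A C : Subring R) : A ≤ A.subintegralClosureIn C :=
  le_sInf fun _ hT => hT.1

theorem subintegralClosureIn_le {A C T : Subring R} (hAT : A ≤ T)
    (hT : ∀ b ∈ C, b ^ 2 ∈ T → b ^ 3 ∈ T → b ∈ T) : A.subintegralClosureIn C ≤ T :=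
  sInf_le ⟨hAT, hT⟩

theorem mem_subintegralClosureIn_of_sq_of_cube {A C : Subring R} {b : R} (hb : b ∈ C)
    (h2 : b ^ 2 ∈ A.subintegralClosureIn C) (h3 : b ^ 3 ∈ A.subintegralClosureIn C) :
    b ∈ A.subintegralClosureIn C :=
  mem_sInf.2 fun _ hT => hT.2 b hb (mem_sInf.1 h2 _ hT) (mem_sInf.1 h3 _ hT)

theorem subintegralClosure_isSubintegrallyClosedIn (A : Subring R) :
    A.subintegralClosure.IsSubintegrallyClosedIn :=
  fun _ => mem_subintegralClosureIn_of_sq_of_cube trivial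

theorem pow_mem_of_sq_mem_of_cube_mem {T : Subring R} {b : R} (h2 : b ^ 2 ∈ T)
    (h3 : b ^ 3 ∈ T) {k : ℕ} (hk : 2 ≤ k) : b ^ k ∈ T := by
  induction k using Nat.strong_induction_on with
  | _ k ih =>
    match k, hk with
    | 2, _ => exact h2
    | 3, _ => exact h3
    | k + 4, _ => simpa [← pow_add] using mul_mem (ih (k + 2) (by omega) (by omega)) h2

/-- Downward induction: if `z ^ (n + 1)` and all higher powers lie in the closure, then so do
`(z ^ n) ^ 2` and `(z ^ n) ^ 3`, hence `z ^ n`. -/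
theorem mem_subintegralClosureIn_of_pow_mem {A C : Subring R} {z : R} (hz : z ∈ C) (n₀ : ℕ)
    (hpow : ∀ n, n₀ ≤ n → z ^ n ∈ A.subintegralClosureIn C) : z ∈ A.subintegralClosureIn C := by
  induction n₀ with
  | zero => simpa using hpow 1 (Nat.zero_le 1)
  | succ n₀ ih =>
    refine ih fun n hn => ?_
    rcases hn.eq_or_lt with rfl | hn
    · rcases n₀.eq_zero_or_pos with rfl | hpos
      · simp [one_mem]
      refine mem_subintegralClosureIn_of_sq_of_cube (pow_mem hz n₀) ?_ ?_ <;>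
        rw [← pow_mul] <;> exact hpow _ (by omega)
    · exact hpow n hn

section

variable {T : Subring R} {f h : R}

theorem pow_mul_sub_pow_mem (hf2 : f ^ 2 ∈ T) (hf3 : f ^ 3 ∈ T) (hh : h ∈ T) (j : ℕ) {k : ℕ}
    (hk : 2 ≤ k) : f ^ k * (h - f) ^ j ∈ T := by
  induction j generalizing k with
  | zero => simpa using pow_mem_of_sq_mem_of_cube_mem hf2 hf3 hk
  | succ j ih =>
    rw [show f ^ k * (h - f) ^ (j + 1) = f ^ k * (h - f) ^ j * h - f ^ (k + 1) * (h - f) ^ j by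
      ring]
    exact sub_mem (mul_mem (ih hk) hh) (ih (by omega))

/-- Expanding `h ^ (n + 1) = (f + (h - f)) ^ (n + 1)`, every term except `(h - f) ^ (n + 1)`
is divisible by `f`, so after multiplying by `f` it is divisible by `f²`. -/
theorem pow_mul_sub_sub_pow_mul_mem (hf2 : f ^ 2 ∈ T) (hf3 : f ^ 3 ∈ T) (hh : h ∈ T) (n : ℕ) :
    h ^ (n + 1) * f - (h - f) ^ (n + 1) * f ∈ T := by
  have hexp := add_pow f (h - f) (n + 1)
  rw [add_sub_cancel, Finset.sum_range_succ'] at hexp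
  simp only [hexp, pow_zero, one_mul, Nat.sub_zero, Nat.choose_zero_right, Nat.cast_one,
    mul_one, add_mul, add_sub_cancel_right, Finset.sum_mul]
  refine sum_mem fun i _ => ?_
  rw [mul_right_comm, mul_right_comm _ _ f, ← pow_succ]
  exact mul_mem (pow_mul_sub_pow_mem hf2 hf3 hh _ (by omega)) (natCast_mem T _)

theorem sq_mem_and_cube_mem_of_pow_succ_mul_mem (hf2 : f ^ 2 ∈ T) (hf3 : f ^ 3 ∈ T)
    (hh : h ∈ T) {k : ℕ} (hk : h ^ (k + 1) * f ∈ T) :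
    (h ^ k * (f - h)) ^ 2 ∈ T ∧ (h ^ k * (f - h)) ^ 3 ∈ T := by
  have hhk : h ^ k ∈ T := pow_mem hh k
  constructor
  · rw [show (h ^ k * (f - h)) ^ 2 =
        h ^ k * h ^ k * f ^ 2 - 2 * (h ^ k * (h ^ (k + 1) * f)) + h ^ (k + 1) * h ^ (k + 1) by
      ring]
    exact add_mem (sub_mem (mul_mem (mul_mem hhk hhk) hf2)
      (mul_mem (natCast_mem T 2) (mul_mem hhk hk))) (mul_mem (pow_mem hh _) (pow_mem hh _))
  · rw [show (h ^ k * (f - h)) ^ 3 = (h ^ k) ^ 3 * f ^ 3 - 3 * ((h ^ k) ^ 3 * h * f ^ 2) +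
        3 * ((h ^ k) ^ 2 * h * (h ^ (k + 1) * f)) - (h ^ (k + 1)) ^ 3 by ring]
    exact sub_mem (add_mem (sub_mem (mul_mem (pow_mem hhk 3) hf3)
      (mul_mem (natCast_mem T 3) (mul_mem (mul_mem (pow_mem hhk 3) hh) hf2)))
      (mul_mem (natCast_mem T 3) (mul_mem (mul_mem (pow_mem hhk 2) hh) hk)))
      (pow_mem (pow_mem hh _) 3)

end

end Subring

namespace Submonoid

variable {G : Type*} [CommMonoid G]

theorem le_subintegralClosureIn (M C : Submonoid G) : M ≤ M.subintegralClosureIn C :=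
  le_sInf fun _ hT => hT.1

theorem subintegralClosureIn_le {M C T : Submonoid G} (hMT : M ≤ T)
    (hT : ∀ x ∈ C, x ^ 2 ∈ T → x ^ 3 ∈ T → x ∈ T) : M.subintegralClosureIn C ≤ T :=
  sInf_le ⟨hMT, hT⟩

theorem mem_subintegralClosureIn_of_sq_of_cube {M C : Submonoid G} {x : G} (hx : x ∈ C)
    (h2 : x ^ 2 ∈ M.subintegralClosureIn C) (h3 : x ^ 3 ∈ M.subintegralClosureIn C) :
    x ∈ M.subintegralClosureIn C :=
  mem_sInf.2 fun _ hT => hT.2 x hx (mem_sInf.1 h2 _ hT) (mem_sInf.1 h3 _ hT)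

def eventualRoots (M : Submonoid G) : Submonoid G where
  carrier := {x | ∀ᶠ n in Filter.atTop, x ^ n ∈ M}
  one_mem' := Filter.Eventually.of_forall fun n => by simp [one_mem]
  mul_mem' hx hy := (hx.and hy).mono fun n h => by simpa [mul_pow] using mul_mem h.1 h.2

theorem subintegralClosureIn_le_eventualRoots (M C : Submonoid G) :
    M.subintegralClosureIn C ≤ M.eventualRoots := by
  refine subintegralClosureIn_le (fun x hx => .of_forall fun n => pow_mem hx n) ?_
  intro x _ h2 h3
  obtain ⟨a₀, ha⟩ := Filter.eventually_atTop.1 h2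
  obtain ⟨b₀, hb⟩ := Filter.eventually_atTop.1 h3
  refine Filter.eventually_atTop.2 ⟨2 * a₀ + 3 * b₀ + 3, fun n hn => ?_⟩
  obtain ⟨a, b, ha₀, hb₀, rfl⟩ : ∃ a b, a₀ ≤ a ∧ b₀ ≤ b ∧ n = 2 * a + 3 * b := by
    rcases Nat.even_or_odd (n - 3 * b₀) with ⟨r, hr⟩ | ⟨r, hr⟩
    · exact ⟨r, b₀, by omega, le_rfl, by omega⟩
    · exact ⟨r - 1, b₀ + 1, by omega, by omega, by omega⟩
  rw [pow_add, pow_mul, pow_mul]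
  exact mul_mem (ha a ha₀) (hb b hb₀)

end Submonoid

section Lower

variable {B : Type*} [CommRing B] {G : Type*} [CommMonoid G] (A : Subring B) (M N : Submonoid G)

theorem single_one_mem_subintegralClosureIn {α : B} (hα : α ∈ A.subintegralClosure) :
    MonoidAlgebra.single 1 α ∈
      (monoidAlgebraSubring A M).subintegralClosureIn (monoidAlgebraSubring ⊤ N) := by
  let cl := (monoidAlgebraSubring A M).subintegralClosureIn (monoidAlgebraSubring ⊤ N)
  suffices A.subintegralClosure ≤ cl.comap MonoidAlgebra.singleOneRingHom from this hα
  refine Subring.subintegralClosureIn_le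
    (fun a ha => Subring.le_subintegralClosureIn _ _ (single_mem_monoidAlgebraSubring ha M.one_mem))
    fun b _ h2 h3 => ?_
  rw [Subring.mem_comap, map_pow] at h2 h3
  exact Subring.mem_subintegralClosureIn_of_sq_of_cube
    (single_mem_monoidAlgebraSubring trivial N.one_mem) h2 h3

theorem single_mem_subintegralClosureIn_of_mem_eventualRoots {m : G} (hmN : m ∈ N)
    (hm : m ∈ M.eventualRoots) :
    MonoidAlgebra.single m 1 ∈
      (monoidAlgebraSubring A M).subintegralClosureIn (monoidAlgebraSubring ⊤ N) := by
  obtain ⟨n₀, hn₀⟩ := Filter.eventually_atTop.1 hm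
  refine Subring.mem_subintegralClosureIn_of_pow_mem
    (single_mem_monoidAlgebraSubring trivial hmN) n₀ fun n hn => ?_
  rw [MonoidAlgebra.single_pow, one_pow]
  exact Subring.le_subintegralClosureIn _ _
    (single_mem_monoidAlgebraSubring A.one_mem (hn₀ n hn))

theorem monoidAlgebraSubring_le_subintegralClosureIn {S : Submonoid G}
    (hS : S ≤ N ⊓ M.eventualRoots) :
    monoidAlgebraSubring A.subintegralClosure S ≤
      (monoidAlgebraSubring A M).subintegralClosureIn (monoidAlgebraSubring ⊤ N) := by
  refine Subring.closure_le.2 ?_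
  rintro _ ⟨α, hα, m, hm, rfl⟩
  rw [show MonoidAlgebra.single m α = MonoidAlgebra.single 1 α * MonoidAlgebra.single m 1 by
    rw [MonoidAlgebra.single_mul_single, one_mul, mul_one]]
  exact mul_mem (single_one_mem_subintegralClosureIn A M N hα)
    (single_mem_subintegralClosureIn_of_mem_eventualRoots A M N (hS hm).1 (hS hm).2)

end Lower

/-- Embed `M` into the `ℚ`-vector space `DivisibleHull M` and take a linear form that vanishes
on none of the finitely many differences of distinct elements of `s`. -/
theorem exists_addMonoidHom_rat_injOn {M : Type*} [AddCommGroup M] [IsAddTorsionFree M]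
    (s : Finset M) : ∃ φ : M →+ ℚ, Set.InjOn φ s := by
  let ι := ((s ×ˢ s).filter fun p => p.1 ≠ p.2 : Finset (M × M))
  let ε : M →+ DivisibleHull M := AddMonoidHom.mk' (↑) fun _ _ => DivisibleHull.coe_add
  obtain ⟨ψ, hψ⟩ := Module.exists_dual_forall_apply_ne_zero (K := ℚ)
    (fun p : ι => ε p.1.1 - ε p.1.2) fun p => sub_ne_zero.2 fun h =>
      (Finset.mem_filter.1 p.2).2 (DivisibleHull.coe_injective h)
  refine ⟨ψ.toAddMonoidHom.comp ε, fun x hx y hy hxy => by_contra fun hne => ?_⟩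
  refine hψ ⟨(x, y), Finset.mem_filter.2 ⟨Finset.mem_product.2 ⟨hx, hy⟩, hne⟩⟩ ?_
  simpa [sub_eq_zero] using hxy

namespace MonoidAlgebra

section Monoid

variable {B : Type*} [CommRing B] {G : Type*} [Monoid G] (φ : Additive G →+ ℚ)

theorem card_support_single_mul_erase_lt {f : MonoidAlgebra B G} {g : G}
    (hg : g ∈ f.coeff.support) (a : G) (r : B) :
    (single a r * f.erase g).coeff.support.card < f.coeff.support.card :=
  calc _ ≤ ((f.erase g).coeff.support.image (a * ·)).card :=
        Finset.card_le_card (support_coeff_single_mul_subset _ r a)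
    _ ≤ (f.coeff.support.erase g).card := by
      rw [coeff_erase, Finsupp.support_erase]
      exact Finset.card_image_le
    _ < f.coeff.support.card := Finset.card_erase_lt_of_mem hg

def DegreeLE (x : MonoidAlgebra B G) (d : ℚ) : Prop :=
  ∀ w ∈ x.coeff.support, φ (.ofMul w) ≤ d

def IsLeadingExponent (x : MonoidAlgebra B G) (g : G) : Prop :=
  ∀ w ∈ x.coeff.support, w ≠ g → φ (.ofMul w) < φ (.ofMul g)

variable {φ}

namespace DegreeLE

variable {x y : MonoidAlgebra B G} {c d : ℚ}

theorem neg (hx : DegreeLE φ x d) : DegreeLE φ (-x) d :=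
  fun w hw => hx w (by simpa [coeff_neg] using hw)

theorem mul (hx : DegreeLE φ x c) (hy : DegreeLE φ y d) : DegreeLE φ (x * y) (c + d) := by
  intro w hw
  obtain ⟨a, ha, b, hb, rfl⟩ := Finset.mem_mul.1 (support_coeff_mul_subset x y hw)
  simpa [ofMul_mul] using add_le_add (hx a ha) (hy b hb)

theorem pow (hx : DegreeLE φ x d) (n : ℕ) : DegreeLE φ (x ^ n) (n * d) := by
  induction n with
  | zero =>
    intro w hw
    simp [Finset.mem_singleton.1 (support_coeff_one_subset (by simpa using hw))]
  | succ n ih => simpa [pow_succ, add_mul] using ih.mul hx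

theorem coeff_eq_zero (hx : DegreeLE φ x d) {w : G} (hw : d < φ (.ofMul w)) : x.coeff w = 0 :=
  Finsupp.notMem_support_iff.1 fun h => (hw.trans_le (hx w h)).false

end DegreeLE

namespace IsLeadingExponent

variable {x y : MonoidAlgebra B G} {a b : G}

theorem degreeLE (hx : IsLeadingExponent φ x a) : DegreeLE φ x (φ (.ofMul a)) := fun w hw =>
  if h : w = a then h ▸ le_rfl else (hx w hw h).le

theorem mul (hx : IsLeadingExponent φ x a) (hy : IsLeadingExponent φ y b) :
    IsLeadingExponent φ (x * y) (a * b) := by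
  intro w hw hne
  obtain ⟨p, hp, q, hq, rfl⟩ := Finset.mem_mul.1 (support_coeff_mul_subset x y hw)
  simp only [ofMul_mul, map_add]
  by_cases hpa : p = a
  · subst hpa
    exact add_lt_add_of_le_of_lt le_rfl (hy q hq fun h => hne (h ▸ rfl))
  · exact add_lt_add_of_lt_of_le (hx p hp hpa) (hy.degreeLE q hq)

theorem coeff_mul (hx : IsLeadingExponent φ x a) (hy : IsLeadingExponent φ y b) :
    (x * y).coeff (a * b) = x.coeff a * y.coeff b := by
  have hne {p q : G} (h : φ (.ofMul p) + φ (.ofMul q) < φ (.ofMul a) + φ (.ofMul b)) :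
      p * q ≠ a * b := fun e => h.ne (by simpa [ofMul_mul] using congrArg (φ ∘ .ofMul) e)
  rw [MonoidAlgebra.coeff_mul, Finsupp.sum_eq_single a, Finsupp.sum_eq_single b]
  · simp
  · intro q hq hqb
    rw [if_neg (hne (add_lt_add_of_le_of_lt le_rfl (hy q (Finsupp.mem_support_iff.2 hq) hqb)))]
  · simp
  · intro p hp hpa
    refine Finset.sum_eq_zero fun q hq => if_neg (hne ?_)
    exact add_lt_add_of_lt_of_le (hx p (Finsupp.mem_support_iff.2 hp) hpa) (hy.degreeLE q hq)
  · simp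

theorem pow (hx : IsLeadingExponent φ x a) (n : ℕ) : IsLeadingExponent φ (x ^ n) (a ^ n) := by
  induction n with
  | zero =>
    intro w hw hne
    exact absurd (Finset.mem_singleton.1 (support_coeff_one_subset (by simpa using hw)))
      (by simpa using hne)
  | succ n ih => simpa [pow_succ] using ih.mul hx

theorem coeff_pow (hx : IsLeadingExponent φ x a) (n : ℕ) :
    (x ^ n).coeff (a ^ n) = x.coeff a ^ n := by
  induction n with
  | zero => simp [one_def]
  | succ n ih => rw [pow_succ, pow_succ, (hx.pow n).coeff_mul hx, ih, pow_succ]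

end IsLeadingExponent

end Monoid

section CommMonoid

variable {B : Type*} [CommRing B] {G : Type*} [CommMonoid G]
variable {A : Subring B} {M : Submonoid G} {φ : Additive G →+ ℚ}

theorem single_mem_of_isLeadingExponent [IsReduced B] (hA : A.IsSubintegrallyClosedIn)
    {N : Submonoid G} (hM : ∀ x ∈ N, x ^ 2 ∈ M → x ^ 3 ∈ M → x ∈ M) {f : MonoidAlgebra B G}
    {g : G} (hf : IsLeadingExponent φ f g) (hg : g ∈ N) (hfg : f.coeff g ≠ 0)
    (hf2 : f ^ 2 ∈ monoidAlgebraSubring A M) (hf3 : f ^ 3 ∈ monoidAlgebraSubring A M) :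
    single g (f.coeff g) ∈ monoidAlgebraSubring A M := by
  have key {k : ℕ} (hk : f ^ k ∈ monoidAlgebraSubring A M) : f.coeff g ^ k ∈ A ∧ g ^ k ∈ M := by
    rw [mem_monoidAlgebraSubring, ← hf.coeff_pow] at *
    refine ⟨hk.1 _, hk.2 _ (Finsupp.mem_support_iff.2 ?_)⟩
    rw [hf.coeff_pow]
    exact fun h => hfg (IsReduced.eq_zero _ ⟨k, h⟩)
  exact single_mem_monoidAlgebraSubring (hA _ (key hf2).1 (key hf3).1)
    (hM g hg (key hf2).2 (key hf3).2)

theorem exists_pow_mul_mem_of_isLeadingExponent {S : Submonoid G} {f : MonoidAlgebra B G} {g : G}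
    (hf : IsLeadingExponent φ f g) (hf2 : f ^ 2 ∈ monoidAlgebraSubring A S)
    (hf3 : f ^ 3 ∈ monoidAlgebraSubring A S)
    (hh : single g (f.coeff g) ∈ monoidAlgebraSubring A S) :
    ∃ n, single g (f.coeff g) ^ n * f ∈ monoidAlgebraSubring A S := by
  set h := single g (f.coeff g)
  set δ := fun w : G => φ (.ofMul w)
  obtain ⟨d, hdg, hd⟩ : ∃ d < δ g, ∀ w ∈ f.coeff.support.erase g, δ w ≤ d := by
    rcases (f.coeff.support.erase g).eq_empty_or_nonempty with he | hne
    · exact ⟨δ g - 1, by linarith, by simp [he]⟩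
    · obtain ⟨a, ha, hmax⟩ := (f.coeff.support.erase g).exists_max_image δ hne
      exact ⟨δ a, hf a (Finset.mem_of_mem_erase ha) (Finset.ne_of_mem_erase ha), hmax⟩
  obtain ⟨ℓ, hℓ⟩ := (f.coeff.support.finite_toSet.image δ).bddBelow
  obtain ⟨m, hm⟩ := exists_nat_gt ((δ g - ℓ) / (δ g - d))
  rw [div_lt_iff₀ (sub_pos.2 hdg)] at hm
  have hu : DegreeLE φ (h - f) d := by
    rw [← single_add_erase g f, sub_add_cancel_left]
    exact DegreeLE.neg fun w hw => hd w (by simpa using hw)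
  have hD := (hu.pow (m + 1)).mul hf.degreeLE
  refine ⟨m + 1, mem_monoidAlgebraSubring_of_coeff_eq
    (Subring.pow_mul_sub_sub_pow_mul_mem hf2 hf3 hh m) fun w hw => ?_⟩
  rw [coeff_sub, Finsupp.sub_apply, hD.coeff_eq_zero, sub_zero]
  rw [single_pow] at hw
  obtain ⟨a, ha, rfl⟩ := Finset.mem_image.1 (support_coeff_single_mul_subset _ _ _ hw)
  have : ℓ ≤ δ a := hℓ ⟨a, ha, rfl⟩
  simp only [ofMul_mul, ofMul_pow, map_add, map_nsmul, nsmul_eq_mul]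
  push_cast
  nlinarith

end CommMonoid

end MonoidAlgebra

section

open MonoidAlgebra

variable {B : Type*} [CommRing B] {G : Type*} [CommGroup G] [IsMulTorsionFree G]

theorem MonoidAlgebra.exists_isLeadingExponent {f : MonoidAlgebra B G} (hf : f ≠ 0) :
    ∃ (φ : Additive G →+ ℚ) (g : G), g ∈ f.coeff.support ∧ IsLeadingExponent φ f g := by
  obtain ⟨φ, hφ⟩ := exists_addMonoidHom_rat_injOn (M := Additive G) f.coeff.support
  obtain ⟨g, hg, hmax⟩ := f.coeff.support.exists_max_image (fun w => φ (.ofMul w))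
    (Finsupp.support_nonempty_iff.2 (mt coeff_eq_zero.1 hf))
  exact ⟨φ, g, hg, fun w hw hne => (hmax w hw).lt_of_ne fun h => hne (hφ hw hg h)⟩

theorem mem_monoidAlgebraSubring_of_sq_mem_of_cube_mem [IsReduced B] {A : Subring B}
    (hA : A.IsSubintegrallyClosedIn) {M N : Submonoid G}
    (hM : ∀ x ∈ N, x ^ 2 ∈ M → x ^ 3 ∈ M → x ∈ M) {f : MonoidAlgebra B G}
    (hfN : f ∈ monoidAlgebraSubring ⊤ N) (hf2 : f ^ 2 ∈ monoidAlgebraSubring A M)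
    (hf3 : f ^ 3 ∈ monoidAlgebraSubring A M) : f ∈ monoidAlgebraSubring A M := by
  induction hcard : f.coeff.support.card using Nat.strong_induction_on generalizing f with
  | _ n ih =>
  rcases eq_or_ne f 0 with rfl | hf0
  · exact zero_mem _
  obtain ⟨φ, g, hg, hf⟩ := exists_isLeadingExponent hf0
  have hgN : g ∈ N := (mem_monoidAlgebraSubring.1 hfN).2 g hg
  set h := single g (f.coeff g)
  have hh : h ∈ monoidAlgebraSubring A M :=
    single_mem_of_isLeadingExponent hA hM hf hgN (Finsupp.mem_support_iff.1 hg) hf2 hf3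
  have hstep (k : ℕ) (hk : h ^ (k + 1) * f ∈ monoidAlgebraSubring A M) :
      h ^ k * f ∈ monoidAlgebraSubring A M := by
    obtain ⟨hu2, hu3⟩ := Subring.sq_mem_and_cube_mem_of_pow_succ_mul_mem hf2 hf3 hh hk
    have hu : h ^ k * (f - h) ∈ monoidAlgebraSubring A M := by
      refine ih _ ?_ (mul_mem (pow_mem ?_ k) (sub_mem hfN ?_)) hu2 hu3 rfl
      · rw [← hcard, ← single_add_erase g f, add_sub_cancel_left, single_add_erase, single_pow]
        exact card_support_single_mul_erase_lt hg _ _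
      all_goals exact single_mem_monoidAlgebraSubring trivial hgN
    rw [show h ^ k * f = h ^ k * (f - h) + h ^ (k + 1) by ring]
    exact add_mem hu (pow_mem hh _)
  obtain ⟨n, hn⟩ := exists_pow_mul_mem_of_isLeadingExponent hf hf2 hf3 hh
  induction n with
  | zero => simpa using hn
  | succ k ihk => exact ihk (hstep k hn)

end

theorem Submonoid.subintegralClosureIn_isSubintegrallyClosedIn {G : Type*} [CommGroup G]
    {M : Submonoid G} {H : Subgroup G} (hMH : M ≤ H.toSubmonoid) :
    (M.subintegralClosureIn H.toSubmonoid).IsSubintegrallyClosedIn := by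
  intro x h2 h3
  have hle : M.subintegralClosureIn H.toSubmonoid ≤ H.toSubmonoid :=
    subintegralClosureIn_le hMH fun _ hx _ _ => hx
  refine mem_subintegralClosureIn_of_sq_of_cube ?_ h2 h3
  rw [show x = x ^ 3 * (x ^ 2)⁻¹ by group]
  exact H.mul_mem (hle h3) (H.inv_mem (hle h2))

theorem subintegralClosure_monoidAlgebra_eq_general
    {B : Type*} [CommRing B] [IsReduced B] (A : Subring B)
    {G : Type*} [CommGroup G] (htf : MulTorsionFree G)
    (M N : Submonoid G) (hMN : M ≤ N) :
    (monoidAlgebraSubring A M).subintegralClosureIn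
        (monoidAlgebraSubring (⊤ : Subring B) N) =
      monoidAlgebraSubring (A.subintegralClosure)
        (N ⊓ M.subintegralClosureIn (Subgroup.closure (M : Set G)).toSubmonoid) := by
  have : IsMulTorsionFree G := ⟨fun n hn x y h => htf x y n hn h⟩
  have hsn := M.subintegralClosureIn_isSubintegrallyClosedIn
    (H := Subgroup.closure (M : Set G)) fun _ hx => Subgroup.subset_closure hx
  refine le_antisymm (Subring.subintegralClosureIn_le ?_ fun f hfN hf2 hf3 => ?_)
    (monoidAlgebraSubring_le_subintegralClosureIn A M N
      (inf_le_inf_left N (M.subintegralClosureIn_le_eventualRoots _)))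
  · exact monoidAlgebraSubring_mono (A.le_subintegralClosureIn ⊤)
      (le_inf hMN (M.le_subintegralClosureIn _))
  · exact mem_monoidAlgebraSubring_of_sq_mem_of_cube_mem
      A.subintegralClosure_isSubintegrallyClosedIn (fun x hx h2 h3 =>
        Submonoid.mem_inf.2 ⟨hx, hsn x (Submonoid.mem_inf.1 h2).2 (Submonoid.mem_inf.1 h3).2⟩)
      hfN hf2 hf3

/-- **Sarwar, Lemma 2.4 (Bruns–Gubeladze, Theorem 4.79).**  Let `A ⊆ B` be an extension of
reduced commutative rings and `M ⊆ N` an extension of commutative cancellative torsion-free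
monoids, realized as submonoids of the torsion-free abelian group `G = gp(N)`.  Then the
subintegral closure of `A[M]` in `B[N]` is `⁺A[N ∩ sn(M)]`, where `⁺A` is the subintegral
closure of `A` in `B` and `sn(M)` is the subintegral closure of `M` in `gp(M)` (the subgroup
of `G` generated by `M`). -/
theorem subintegralClosure_monoidAlgebra_eq
    {B : Type*} [CommRing B] [IsReduced B] (A : Subring B)
    {G : Type*} [CommGroup G] (htf : MulTorsionFree G)
    (M N : Submonoid G) (hMN : M ≤ N)
    (hgp : ∀ g : G, ∃ a ∈ N, ∃ b ∈ N, g = a * b⁻¹) :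
    (monoidAlgebraSubring A M).subintegralClosureIn
        (monoidAlgebraSubring (⊤ : Subring B) N) =
      monoidAlgebraSubring (A.subintegralClosure)
        (N ⊓ M.subintegralClosureIn (Subgroup.closure (M : Set G)).toSubmonoid) :=
  subintegralClosure_monoidAlgebra_eq_general A htf M N hMN
end
end

section
/- Let S = S₀ ⊕ S₁ ⊕ S₂ ⊕ ⋯ be a commutative ring graded by the natural numbers, and let R ⊆ S be a subring which is graded compatibly, i.e. R = R₀ ⊕ R₁ ⊕ R₂ ⊕ ⋯ with Rᵢ = R ∩ Sᵢ for all i ≥ 0 (equivalently, all homogeneous components of every element of R lie in R). If the canonical map θ : 𝓘(R,S) → 𝓘(R[X],S[X]), induced by the inclusion of S into the polynomial ring S[X] (sending an invertible R-submodule I of S to the R[X]-submodule of S[X] generated by I), is an isomorphism, then the canonical map 𝓘(R₀,S₀) → 𝓘(R,S), induced by the inclusion S₀ ⊆ S, is an isomorphism. -/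
/-! The grade-zero projection `π : S → S₀` is a retraction of the inclusion `ι : S₀ → S`, so
`θ(R₀,S₀)` has a left inverse. For the other composite, the ring map `β : S → S[X]`,
`sᵢ ↦ sᵢ Xⁱ`, is a homotopy: `ev₁ ∘ β = id` and `ev₀ ∘ β = ι ∘ π`. Every evaluation at a point
of `R` is a left inverse of `C : S → S[X]`, so once `C` induces an isomorphism of invertible
submodules, `ev₀` and `ev₁` induce the same map, and `ι ∘ π` induces the identity. -/

open scoped Classical

noncomputable section

/-- The grade-zero part `S₀` of an `ℕ`-graded commutative ring `S = ⊕ᵢ Sᵢ`, as a subring. -/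
def gradeZeroSubring {S : Type*} [CommRing S] (𝒜 : ℕ → AddSubgroup S) [GradedRing 𝒜] :
    Subring S where
  carrier := 𝒜 0
  zero_mem' := (𝒜 0).zero_mem
  add_mem' := fun h1 h2 => (𝒜 0).add_mem h1 h2
  neg_mem' := fun h => (𝒜 0).neg_mem h
  one_mem' := SetLike.one_mem_graded 𝒜
  mul_mem' := fun ha hb => by simpa using SetLike.mul_mem_graded ha hb

namespace Submodule

variable {B B' B'' : Type*} [CommRing B] [CommRing B'] [CommRing B'']
  {R : Subring B} {R' : Subring B'} {R'' : Subring B''}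

theorem span_image_span (f : B →+* B') (hf : R ≤ R'.comap f) (s : Set B) :
    span R' (f '' (span R s : Set B)) = span R' (f '' s) := by
  refine le_antisymm (span_le.2 ?_) (span_mono (Set.image_mono subset_span))
  rintro _ ⟨x, hx, rfl⟩
  induction hx using span_induction with
  | mem x hx => exact subset_span ⟨x, hx, rfl⟩
  | zero => simp
  | add x y _ _ hx hy => simpa using add_mem hx hy
  | smul a x _ hx =>
    rw [Subring.smul_def, smul_eq_mul, map_mul]
    exact smul_mem _ (⟨f a, hf a.2⟩ : R') hx

def spanImageHom (f : B →+* B') (hf : R ≤ R'.comap f) : Submodule R B →* Submodule R' B' where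
  toFun I := span R' (f '' I)
  map_one' := by
    rw [one_eq_span, span_image_span f hf, Set.image_singleton, map_one, one_eq_span]
  map_mul' I J := by
    rw [mul_eq_span_mul_set, span_image_span f hf, Set.image_mul, ← span_mul_span]

def unitsSpanImage (f : B →+* B') (hf : R ≤ R'.comap f) :
    (Submodule R B)ˣ →* (Submodule R' B')ˣ :=
  Units.map (spanImageHom f hf)

@[simp]
theorem coe_unitsSpanImage (f : B →+* B') (hf : R ≤ R'.comap f) (I : (Submodule R B)ˣ) :
    (unitsSpanImage f hf I : Submodule R' B') = span R' (f '' (I : Submodule R B)) :=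
  rfl

theorem unitsSpanImage_comp (f : B →+* B') (g : B' →+* B'') (hf : R ≤ R'.comap f)
    (hg : R' ≤ R''.comap g) (hgf : R ≤ R''.comap (g.comp f)) :
    (unitsSpanImage g hg).comp (unitsSpanImage f hf) = unitsSpanImage (g.comp f) hgf := by
  ext I : 2
  simp [span_image_span g hg, Set.image_image]

theorem unitsSpanImage_id (h : R ≤ R.comap (RingHom.id B)) :
    unitsSpanImage (RingHom.id B) h = MonoidHom.id _ := by
  ext I : 2
  simp

theorem unitsSpanImage_congr {f f' : B →+* B'} (hf : R ≤ R'.comap f) (hf' : R ≤ R'.comap f')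
    (h : f = f') : unitsSpanImage f hf = unitsSpanImage f' hf' := by
  subst h; rfl

theorem unitsSpanImage_comp_eq_id {f : B →+* B'} {g : B' →+* B} (hf : R ≤ R'.comap f)
    (hg : R' ≤ R.comap g) (hgf : g.comp f = RingHom.id B) :
    (unitsSpanImage g hg).comp (unitsSpanImage f hf) = MonoidHom.id _ := by
  rw [unitsSpanImage_comp f g hf hg fun _ hx => hg (hf hx)]
  exact (unitsSpanImage_congr _ (fun _ hx => hx) hgf).trans (unitsSpanImage_id _)

theorem unitsSpanImage_comp_eq_of_comp_eq {B₁ B₂ : Type*} [CommRing B₁] [CommRing B₂]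
    {R₁ : Subring B₁} {R₂ : Subring B₂} {f : B →+* B₁} {g : B₁ →+* B'} {f' : B →+* B₂}
    {g' : B₂ →+* B'} (hf : R ≤ R₁.comap f) (hg : R₁ ≤ R'.comap g) (hf' : R ≤ R₂.comap f')
    (hg' : R₂ ≤ R'.comap g') (h : g.comp f = g'.comp f') :
    (unitsSpanImage g hg).comp (unitsSpanImage f hf) =
      (unitsSpanImage g' hg').comp (unitsSpanImage f' hf') := by
  rw [unitsSpanImage_comp f g hf hg fun _ hx => hg (hf hx),
    unitsSpanImage_comp f' g' hf' hg' fun _ hx => hg' (hf' hx)]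
  exact unitsSpanImage_congr _ _ h

end Submodule

section Polynomial

open Polynomial Submodule

variable {S : Type*} [CommRing S] (R : Subring S)

theorem Subring.le_comap_C : R ≤ (mapRingHom R.subtype).range.comap C :=
  fun a ha => ⟨C ⟨a, ha⟩, map_C _⟩

theorem Subring.polynomial_le_comap_evalRingHom {a : S} (ha : a ∈ R) :
    (mapRingHom R.subtype).range ≤ R.comap (evalRingHom a) := by
  rintro _ ⟨p, rfl⟩
  change eval a (p.map R.subtype) ∈ R
  rw [eval_map, show a = R.subtype ⟨a, ha⟩ from rfl, eval₂_at_apply]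
  exact SetLike.coe_mem _

theorem Subring.unitsSpanImage_evalRingHom_eq_of_surjective
    (hsurj : Function.Surjective (unitsSpanImage C R.le_comap_C)) {a b : S} (ha : a ∈ R)
    (hb : b ∈ R) :
    unitsSpanImage (evalRingHom a) (R.polynomial_le_comap_evalRingHom ha) =
      unitsSpanImage (evalRingHom b) (R.polynomial_le_comap_evalRingHom hb) := by
  have eval_comp_C (c : S) : (evalRingHom c).comp C = RingHom.id S := by ext; simp
  rw [← MonoidHom.cancel_right hsurj, unitsSpanImage_comp_eq_id _ _ (eval_comp_C a),
    unitsSpanImage_comp_eq_id _ _ (eval_comp_C b)]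

end Polynomial

section Graded

open Polynomial DirectSum

variable {S : Type*} [CommRing S] (𝒜 : ℕ → AddSubgroup S) [GradedRing 𝒜]

def gradeZeroProj : S →+* gradeZeroSubring 𝒜 :=
  (GradedRing.projZeroRingHom 𝒜).codRestrict _ fun _ => SetLike.coe_mem _

theorem coe_gradeZeroProj (s : S) : (gradeZeroProj 𝒜 s : S) = GradedRing.proj 𝒜 0 s :=
  rfl

theorem gradeZeroProj_comp_subtype :
    (gradeZeroProj 𝒜).comp (gradeZeroSubring 𝒜).subtype = RingHom.id _ := by
  ext x
  exact decompose_of_mem_same 𝒜 x.2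

def gradedToPolynomial : S →+* S[X] :=
  (toSemiring (fun i => (monomial i).toAddMonoidHom.comp (𝒜 i).subtype)
      (by simp [SetLike.coe_gOne]) fun x y => by simp [monomial_mul_monomial]).comp
    (decomposeRingEquiv 𝒜).toRingHom

theorem gradedToPolynomial_of_mem {i : ℕ} {x : S} (hx : x ∈ 𝒜 i) :
    gradedToPolynomial 𝒜 x = monomial i x := by
  simp only [gradedToPolynomial, RingHom.comp_apply, RingEquiv.toRingHom_eq_coe, RingHom.coe_coe]
  rw [show decomposeRingEquiv 𝒜 x = decompose 𝒜 x from rfl, decompose_of_mem 𝒜 hx]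
  exact toSemiring_of _ _ _ _ _

theorem evalRingHom_one_comp_gradedToPolynomial :
    (evalRingHom 1).comp (gradedToPolynomial 𝒜) = RingHom.id S := by
  ext s
  induction s using Decomposition.inductionOn 𝒜 with
  | zero => simp
  | homogeneous x => simp [gradedToPolynomial_of_mem 𝒜 x.2]
  | add s t hs ht => simp_all

theorem evalRingHom_zero_comp_gradedToPolynomial :
    (evalRingHom 0).comp (gradedToPolynomial 𝒜) =
      (gradeZeroSubring 𝒜).subtype.comp (gradeZeroProj 𝒜) := by
  ext s
  induction s using Decomposition.inductionOn 𝒜 with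
  | zero => simp
  | @homogeneous i x =>
    simp only [RingHom.comp_apply, coe_evalRingHom, gradedToPolynomial_of_mem 𝒜 x.2, eval_monomial]
    rw [Subring.coe_subtype, coe_gradeZeroProj, GradedRing.proj_apply]
    rcases i with _ | i
    · rw [pow_zero, mul_one, decompose_of_mem_same 𝒜 x.2]
    · rw [zero_pow i.succ_ne_zero, mul_zero, decompose_of_mem_ne 𝒜 x.2 i.succ_ne_zero]
  | add s t hs ht => simp_all

end Graded

namespace DirectSum.SetLike.IsHomogeneous

open Polynomial Submodule

variable {S : Type*} [CommRing S] {𝒜 : ℕ → AddSubgroup S} [GradedRing 𝒜] {R : Subring S}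

theorem le_comap_gradeZeroProj (hR : IsHomogeneous 𝒜 R) :
    R ≤ (R.comap (gradeZeroSubring 𝒜).subtype).comap (gradeZeroProj 𝒜) :=
  fun _ hx => hR 0 hx

theorem le_comap_gradedToPolynomial (hR : IsHomogeneous 𝒜 R) :
    R ≤ (mapRingHom R.subtype).range.comap (gradedToPolynomial 𝒜) := by
  intro x hx
  rw [Subring.mem_comap, ← sum_support_decompose 𝒜 x, map_sum]
  refine Subring.sum_mem _ fun i _ => ⟨monomial i ⟨_, hR i hx⟩, ?_⟩
  rw [coe_mapRingHom, map_monomial, gradedToPolynomial_of_mem 𝒜 (decompose 𝒜 x i).2]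
  rfl

theorem unitsSpanImage_subtype_comp_gradeZeroProj (hR : IsHomogeneous 𝒜 R)
    (hsurj : Function.Surjective (unitsSpanImage C R.le_comap_C)) :
    (unitsSpanImage (gradeZeroSubring 𝒜).subtype le_rfl).comp
        (unitsSpanImage (gradeZeroProj 𝒜) hR.le_comap_gradeZeroProj) = MonoidHom.id _ :=
  calc _ = (unitsSpanImage (evalRingHom 0) (R.polynomial_le_comap_evalRingHom R.zero_mem)).comp
          (unitsSpanImage (gradedToPolynomial 𝒜) hR.le_comap_gradedToPolynomial) :=
        unitsSpanImage_comp_eq_of_comp_eq _ _ _ _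
          (evalRingHom_zero_comp_gradedToPolynomial 𝒜).symm
    _ = (unitsSpanImage (evalRingHom 1) (R.polynomial_le_comap_evalRingHom R.one_mem)).comp
          (unitsSpanImage (gradedToPolynomial 𝒜) hR.le_comap_gradedToPolynomial) := by
        rw [R.unitsSpanImage_evalRingHom_eq_of_surjective hsurj R.zero_mem R.one_mem]
    _ = MonoidHom.id _ :=
        unitsSpanImage_comp_eq_id _ _ (evalRingHom_one_comp_gradedToPolynomial 𝒜)

end DirectSum.SetLike.IsHomogeneous

/-- **Sarwar, Lemma 3.1 (Swan–Weibel homotopy trick).**  Let `S = S₀ ⊕ S₁ ⊕ ⋯` be an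
`ℕ`-graded commutative ring and `R ⊆ S` a compatibly graded subring (all homogeneous
components of elements of `R` lie in `R`).  If the canonical map
`θ(R,S) : 𝓘(R,S) → 𝓘(R[X],S[X])` is an isomorphism, then the canonical map
`θ(R₀,S₀) : 𝓘(R₀,S₀) → 𝓘(R,S)` is an isomorphism.  Both canonical maps are phrased as the
existence of a group isomorphism whose underlying map is the canonical one. -/
theorem gradeZero_invertibleSubmodules_isIso_of_polynomial_isIso
    {S : Type*} [CommRing S] (𝒜 : ℕ → AddSubgroup S) [GradedRing 𝒜]
    (R : Subring S) (hR : ∀ x ∈ R, ∀ i, GradedRing.proj 𝒜 i x ∈ R)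
    (hpoly : ∃ e : (Submodule R S)ˣ ≃*
        (Submodule (Polynomial.mapRingHom R.subtype).range (Polynomial S))ˣ,
      ∀ I : (Submodule R S)ˣ,
        (e I : Submodule (Polynomial.mapRingHom R.subtype).range (Polynomial S)) =
          Submodule.span (Polynomial.mapRingHom R.subtype).range
            (⇑(Polynomial.C : S →+* Polynomial S) '' ((I : Submodule R S) : Set S))) :
    ∃ e : (Submodule (R.comap (gradeZeroSubring 𝒜).subtype) (gradeZeroSubring 𝒜))ˣ ≃*
        (Submodule R S)ˣ,
      ∀ I : (Submodule (R.comap (gradeZeroSubring 𝒜).subtype) (gradeZeroSubring 𝒜))ˣ,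
        (e I : Submodule R S) =
          Submodule.span R
            (Subtype.val ''
              ((I : Submodule (R.comap (gradeZeroSubring 𝒜).subtype) (gradeZeroSubring 𝒜)) :
                Set (gradeZeroSubring 𝒜))) := by
  obtain ⟨e, he⟩ := hpoly
  have hR' : DirectSum.SetLike.IsHomogeneous 𝒜 R := fun i x hx => hR x hx i
  have hsurj : Function.Surjective (Submodule.unitsSpanImage Polynomial.C R.le_comap_C) :=
    fun w => ⟨e.symm w, Units.ext <| by rw [Submodule.coe_unitsSpanImage, ← he, e.apply_symm_apply]⟩
  refine ⟨MonoidHom.toMulEquiv _ _ ?_ (hR'.unitsSpanImage_subtype_comp_gradeZeroProj hsurj),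
    fun I => rfl⟩
  exact Submodule.unitsSpanImage_comp_eq_id _ _ (gradeZeroProj_comp_subtype 𝒜)
end
end

section
/- Let A ⊆ B be an extension of commutative rings and M a positive commutative cancellative torsion-free monoid (not necessarily finitely generated). If A is subintegrally closed in B, then A[M] is subintegrally closed in B[M]. -/
open scoped Classical

noncomputable section

/-!
Write `A[G]` for the elements of `B[G]` with all coefficients in `A`.

First let `G` be an archimedean linearly ordered group and `g ∈ B[G]` with `g², g³ ∈ A[G]`, so
that `gᵏ ∈ A[G]` for all `k ≥ 2`. Let `e` be the smallest exponent at which the coefficient `β`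
of `g` is not in `A`, and `q ∈ A[G]` the part of `g` below `e`. By the binomial theorem,
`(g - q)^(n+1) ≡ (n+1) g (-q)ⁿ` modulo `A[G]`. The lowest term of `(g - q)^(n+1)` is
`β^(n+1) e^(n+1)`, while by the archimedean property all exponents of `g (-q)ⁿ` lie below
`e^(n+1)` once `n` is large. Hence `βⁿ ∈ A` for all large `n`, and then `β ∈ A` because
`A` is subintegrally closed in `B`.

In general, the support of `g` generates a finitely generated cancellative torsion-free monoid,
which embeds in `ℤᵈ`; a generic linear form `ℤᵈ → ℤ` is injective on the finitely many
exponents of `g`, `g²` and `g³`, and transports the question to `B[ℤ]` without changing any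
coefficients.
-/

open MonoidAlgebra

theorem pow_mem_of_sq_mem_of_pow_three_mem {S T : Type*} [Monoid S] [SetLike T S]
    [SubmonoidClass T S] {R : T} {g : S} (h2 : g ^ 2 ∈ R) (h3 : g ^ 3 ∈ R) :
    ∀ n, 2 ≤ n → g ^ n ∈ R := by
  intro n hn
  induction n using Nat.strong_induction_on with
  | _ n ih =>
    rcases (by omega : n = 2 ∨ n = 3 ∨ 4 ≤ n) with rfl | rfl | hn4
    · exact h2
    · exact h3
    · rw [show n = n - 2 + 2 by omega, pow_add]
      exact mul_mem (ih _ (by omega) (by omega)) h2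

theorem Subring.add_pow_succ_sub_mem {S : Type*} [CommRing S] {R : Subring S} {g p : S}
    (hg : ∀ k, 2 ≤ k → g ^ k ∈ R) (hp : p ∈ R) (n : ℕ) :
    (g + p) ^ (n + 1) - g * p ^ n * (n + 1 : ℕ) ∈ R := by
  rw [add_pow, Finset.sum_range_succ', Finset.sum_range_succ']
  simp only [pow_zero, one_mul, Nat.choose_zero_right, Nat.cast_one, mul_one, zero_add, pow_one,
    Nat.choose_one_right, Nat.sub_zero, Nat.add_sub_cancel]
  rw [add_right_comm, add_sub_cancel_right]
  exact add_mem (sum_mem fun k _ => mul_mem (mul_mem (hg _ (by omega)) (pow_mem hp _))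
    (natCast_mem _ _)) (pow_mem hp _)

theorem exists_mul_pow_lt_pow_succ {G : Type*} [CommGroup G] [LinearOrder G] [IsOrderedMonoid G]
    [MulArchimedean G] (c : G) {a e : G} (hae : a < e) :
    ∃ N, ∀ n ≥ N, c * a ^ n < e ^ (n + 1) := by
  have hr : 1 < e / a := one_lt_div'.mpr hae
  obtain ⟨N, hN⟩ := MulArchimedean.arch (c / e * (e / a)) hr
  refine ⟨N, fun n hn => ?_⟩
  have : c / e < (e / a) ^ n :=
    calc c / e < c / e * (e / a) := lt_mul_of_one_lt_right' _ hr
      _ ≤ (e / a) ^ N := hN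
      _ ≤ (e / a) ^ n := pow_le_pow_right' hr.le hn
  rwa [div_pow, div_lt_div_iff', ← pow_succ] at this

theorem Polynomial.exists_injOn_eval {R : Type*} [CommRing R] [IsDomain R] [Infinite R]
    (T : Finset (Polynomial R)) : ∃ t, Set.InjOn (eval t) (T : Set (Polynomial R)) := by
  have hQ : ∏ pq ∈ T.offDiag, (pq.1 - pq.2) ≠ 0 :=
    Finset.prod_ne_zero_iff.mpr fun pq hpq => sub_ne_zero.mpr (Finset.mem_offDiag.mp hpq).2.2
  obtain ⟨t, ht⟩ : ∃ t, (∏ pq ∈ T.offDiag, (pq.1 - pq.2)).eval t ≠ 0 := by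
    by_contra! h
    exact hQ (zero_of_eval_zero _ h)
  refine ⟨t, fun p hp q hq hpq => by_contra fun hne => ht ?_⟩
  rw [eval_prod]
  exact Finset.prod_eq_zero (i := (p, q)) (Finset.mem_offDiag.mpr ⟨hp, hq, hne⟩)
    (by rw [eval_sub, hpq, sub_self])

theorem Module.Free.exists_linearMap_injOn {R V : Type*} [CommRing R] [IsDomain R] [Infinite R]
    [AddCommGroup V] [Module R V] [Module.Free R V] [Module.Finite R V] (T : Finset V) :
    ∃ φ : V →ₗ[R] R, Set.InjOn φ T := by
  let b := Module.finBasis R V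
  let P : V →ₗ[R] Polynomial R :=
    ∑ j : Fin (Module.finrank R V), (Polynomial.monomial (j : ℕ)).comp (b.coord j)
  have hP : Function.Injective P := fun v w hvw => b.ext_elem fun j => by
    simpa [P, Polynomial.finsetSum_coeff, Polynomial.coeff_monomial, Fin.val_inj] using
      congrArg (Polynomial.coeff · j) hvw
  obtain ⟨t, ht⟩ := Polynomial.exists_injOn_eval (T.image P)
  refine ⟨(Polynomial.leval t).comp P, fun v hv w hw h => hP (ht ?_ ?_ h)⟩ <;>
    simpa using ⟨_, ‹_›, rfl⟩

theorem AffineMonoid.exists_monoidHom_injOn {M : Type*} [CommMonoid M] [IsCancelMul M]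
    [Monoid.FG M] [IsMulTorsionFree M] (T : Finset M) :
    ∃ χ : M →* Multiplicative ℤ, Set.InjOn χ T := by
  -- `AffineAddMonoid.embedding` asks for the bundled cancellative structure
  let : CancelCommMonoid M := { mul_left_cancel := IsLeftCancelMul.mul_left_cancel }
  let ι := AffineAddMonoid.embedding (Additive M)
  obtain ⟨φ, hφ⟩ := Module.Free.exists_linearMap_injOn (R := ℤ) (T.image (ι ∘ Additive.ofMul))
  refine ⟨AddMonoidHom.toMultiplicativeRight (φ.toAddMonoidHom.comp ι), fun x hx y hy hxy => ?_⟩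
  exact AffineAddMonoid.embedding_injective (M := Additive M)
    (hφ (by simpa using ⟨x, hx, rfl⟩) (by simpa using ⟨y, hy, rfl⟩)
      (Multiplicative.ofAdd.injective hxy))

namespace MonoidAlgebra

section OrderedCancelMonoid

variable {R G : Type*} [Semiring R] [CommMonoid G] [LinearOrder G] [IsOrderedCancelMonoid G]
  {f g : MonoidAlgebra R G} {y z : G}

theorem uniqueMul_of_mem_lowerBounds {s t : Finset G} (hy : y ∈ lowerBounds (s : Set G))
    (hz : z ∈ lowerBounds (t : Set G)) : UniqueMul s t y z := by
  intro a b ha hb hab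
  have hya := hy ha
  have hzb := hz hb
  refine ⟨hya.antisymm' ?_, hzb.antisymm' ?_⟩
  · by_contra! hlt
    exact (mul_lt_mul_of_lt_of_le hlt hzb).ne hab.symm
  · by_contra! hlt
    exact (mul_lt_mul_of_le_of_lt hya hlt).ne hab.symm

theorem coeff_mul_mul_of_mem_lowerBounds (hy : y ∈ lowerBounds (f.coeff.support : Set G))
    (hz : z ∈ lowerBounds (g.coeff.support : Set G)) :
    (f * g).coeff (y * z) = f.coeff y * g.coeff z :=
  coeff_mul_mul_of_uniqueMul (uniqueMul_of_mem_lowerBounds hy hz)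

theorem mul_mem_lowerBounds_support_mul (hy : y ∈ lowerBounds (f.coeff.support : Set G))
    (hz : z ∈ lowerBounds (g.coeff.support : Set G)) :
    y * z ∈ lowerBounds ((f * g).coeff.support : Set G) :=
  lowerBounds_mono_set (by exact_mod_cast support_coeff_mul_subset f g)
    (mul_mem_lowerBounds_mul hy hz)

theorem mul_mem_upperBounds_support_mul (hy : y ∈ upperBounds (f.coeff.support : Set G))
    (hz : z ∈ upperBounds (g.coeff.support : Set G)) :
    y * z ∈ upperBounds ((f * g).coeff.support : Set G) :=
  upperBounds_mono_set (by exact_mod_cast support_coeff_mul_subset f g)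
    (mul_mem_upperBounds_mul hy hz)

theorem pow_mem_lowerBounds_support_pow (hy : y ∈ lowerBounds (f.coeff.support : Set G))
    (n : ℕ) : y ^ n ∈ lowerBounds ((f ^ n).coeff.support : Set G) := by
  induction n with
  | zero =>
    intro x hx
    rw [pow_zero] at hx ⊢
    rw [Finset.mem_one.mp (support_coeff_one_subset hx)]
  | succ n ih => rw [pow_succ, pow_succ]; exact mul_mem_lowerBounds_support_mul ih hy

theorem pow_mem_upperBounds_support_pow (hy : y ∈ upperBounds (f.coeff.support : Set G))
    (n : ℕ) : y ^ n ∈ upperBounds ((f ^ n).coeff.support : Set G) := by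
  induction n with
  | zero =>
    intro x hx
    rw [pow_zero] at hx ⊢
    rw [Finset.mem_one.mp (support_coeff_one_subset hx)]
  | succ n ih => rw [pow_succ, pow_succ]; exact mul_mem_upperBounds_support_mul ih hy

theorem coeff_pow_pow_of_mem_lowerBounds (hy : y ∈ lowerBounds (f.coeff.support : Set G))
    (n : ℕ) : (f ^ n).coeff (y ^ n) = f.coeff y ^ n := by
  induction n with
  | zero => simp [one_def]
  | succ n ih =>
    rw [pow_succ, pow_succ, pow_succ,
      coeff_mul_mul_of_mem_lowerBounds (pow_mem_lowerBounds_support_pow hy n) hy, ih]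

end OrderedCancelMonoid

section MulArchimedean

variable {R G : Type*} [Semiring R] [CommGroup G] [LinearOrder G] [IsOrderedMonoid G]
  [MulArchimedean G]

theorem exists_coeff_mul_pow_eq_zero (f p : MonoidAlgebra R G) {e : G}
    (hp : ∀ x ∈ p.coeff.support, x < e) :
    ∃ N, ∀ n ≥ N, (f * p ^ n).coeff (e ^ (n + 1)) = 0 := by
  obtain ⟨c, hc⟩ := f.coeff.support.bddAbove
  rcases p.coeff.support.eq_empty_or_nonempty with hp0 | hne
  · refine ⟨1, fun n hn => ?_⟩
    rw [Finsupp.support_eq_empty, coeff_eq_zero] at hp0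
    rw [hp0, zero_pow (by omega), mul_zero, coeff_zero, Finsupp.coe_zero, Pi.zero_apply]
  · obtain ⟨N, hN⟩ := exists_mul_pow_lt_pow_succ c (hp _ (p.coeff.support.max'_mem hne))
    refine ⟨N, fun n hn => Finsupp.notMem_support_iff.mp fun hmem => (hN n hn).not_ge ?_⟩
    exact mul_mem_upperBounds_support_mul hc
      (pow_mem_upperBounds_support_pow (fun x hx => Finset.le_max' _ x hx) n) hmem

end MulArchimedean

end MonoidAlgebra

namespace Subring

variable {B : Type*} [CommRing B] (A : Subring B)

def monoidAlgebra (M : Type*) [Monoid M] : Subring (MonoidAlgebra B M) :=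
  (mapRingHom M A.subtype).range

variable {A}

theorem mem_monoidAlgebra {M : Type*} [Monoid M] {x : MonoidAlgebra B M} :
    x ∈ A.monoidAlgebra M ↔ ∀ m, x.coeff m ∈ A := by
  have := congrArg (x ∈ ·) (range_map (M := M) A.subtype.toAddMonoidHom)
  simpa [monoidAlgebra, MonoidAlgebra.coe_mapRingHom] using this

theorem mapDomain_mem_monoidAlgebra_iff {M N : Type*} [Monoid M] [Monoid N] {f : M → N}
    {x : MonoidAlgebra B M} (hf : Set.InjOn f x.coeff.support) :
    mapDomain f x ∈ A.monoidAlgebra N ↔ x ∈ A.monoidAlgebra M := by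
  simp only [mem_monoidAlgebra, coeff_mapDomain]
  constructor
  · intro h m
    by_cases hm : m ∈ x.coeff.support
    · rw [← Finsupp.mapDomain_apply' _ _ subset_rfl hf hm]
      exact h _
    · rw [Finsupp.notMem_support_iff.mp hm]
      exact A.zero_mem
  · intro h n
    by_cases hn : n ∈ (Finsupp.mapDomain f x.coeff).support
    · obtain ⟨m, hm, rfl⟩ := Finset.mem_image.mp (Finsupp.mapDomain_support hn)
      rw [Finsupp.mapDomain_apply' _ _ subset_rfl hf hm]
      exact h m
    · rw [Finsupp.notMem_support_iff.mp hn]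
      exact A.zero_mem

namespace IsSubintegrallyClosedIn

theorem mem_of_pow_mem (hA : A.IsSubintegrallyClosedIn) {b : B} {N : ℕ}
    (h : ∀ n, N ≤ n → b ^ n ∈ A) : b ∈ A := by
  induction N with
  | zero => simpa using h 1 (Nat.zero_le 1)
  | succ N ih =>
    refine ih fun n hn => ?_
    rcases hn.eq_or_lt with rfl | hlt
    · rcases Nat.eq_zero_or_pos N with rfl | hpos
      · simp
      · exact hA _ (by rw [← pow_mul]; exact h _ (by omega))
          (by rw [← pow_mul]; exact h _ (by omega))
    · exact h n hlt

theorem monoidAlgebra_of_mulArchimedean {G : Type*} [CommGroup G] [LinearOrder G]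
    [IsOrderedMonoid G] [MulArchimedean G] (hA : A.IsSubintegrallyClosedIn) :
    (A.monoidAlgebra G).IsSubintegrallyClosedIn := by
  intro g hg2 hg3
  rw [mem_monoidAlgebra]
  by_contra! hbad
  obtain ⟨e, he, hmin⟩ : ∃ e, g.coeff e ∉ A ∧ ∀ x < e, g.coeff x ∈ A := by
    have hfin : {x | g.coeff x ∉ A}.Finite := g.coeff.support.finite_toSet.subset
      fun x (hx : g.coeff x ∉ A) => Finsupp.mem_support_iff.mpr fun h0 => hx (h0 ▸ A.zero_mem)
    obtain ⟨e, he, hmin⟩ := hfin.exists_minimal hbad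
    exact ⟨e, he, fun x hx => by_contra fun hxA => (show e ≤ x from hmin hxA hx.le).not_gt hx⟩
  set q : MonoidAlgebra B G := ofCoeff (g.coeff.filter (· < e))
  have hq : q ∈ A.monoidAlgebra G := mem_monoidAlgebra.mpr fun x => by
    by_cases hx : x < e
    · simpa [q, hx] using hmin x hx
    · simp [q, hx]
  have hq_lt : ∀ x ∈ (-q).coeff.support, x < e := by
    intro x hx
    simp only [q, coeff_neg, Finsupp.support_neg, Finsupp.support_filter,
      Finset.mem_filter] at hx
    exact hx.2
  have he_low : e ∈ lowerBounds ((g + -q).coeff.support : Set G) := by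
    intro x hx
    by_contra! hxe
    simp [q, hxe] at hx
  have he_coeff : (g + -q).coeff e = g.coeff e := by simp [q]
  obtain ⟨N, hN⟩ := exists_coeff_mul_pow_eq_zero g (-q) hq_lt
  refine he (hA.mem_of_pow_mem (N := N + 1) fun n hn => ?_)
  obtain ⟨n, rfl⟩ : ∃ k, n = k + 1 := ⟨n - 1, by omega⟩
  have hmem := mem_monoidAlgebra.mp (add_pow_succ_sub_mem
    (pow_mem_of_sq_mem_of_pow_three_mem hg2 hg3) (neg_mem hq) n) (e ^ (n + 1))
  rwa [coeff_sub, Finsupp.sub_apply, coeff_pow_pow_of_mem_lowerBounds he_low, he_coeff,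
    natCast_def, coeff_mul_single_one, hN n (by omega), zero_mul, sub_zero] at hmem

theorem monoidAlgebra_of_fg {M : Type*} [CommMonoid M] [IsCancelMul M] [Monoid.FG M]
    [IsMulTorsionFree M] (hA : A.IsSubintegrallyClosedIn) :
    (A.monoidAlgebra M).IsSubintegrallyClosedIn := by
  intro x hx2 hx3
  set T := x.coeff.support ∪ (x ^ 2).coeff.support ∪ (x ^ 3).coeff.support
  obtain ⟨χ, hχ⟩ := AffineMonoid.exists_monoidHom_injOn T
  have hmap (y : MonoidAlgebra B M) (hy : y.coeff.support ⊆ T) :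
      mapDomainRingHom B χ y ∈ A.monoidAlgebra _ ↔ y ∈ A.monoidAlgebra M :=
    mapDomain_mem_monoidAlgebra_iff (hχ.mono (by exact_mod_cast hy))
  rw [← hmap x (Finset.subset_union_left.trans Finset.subset_union_left)]
  rw [← hmap _ (Finset.subset_union_right.trans Finset.subset_union_left), map_pow] at hx2
  rw [← hmap _ Finset.subset_union_right, map_pow] at hx3
  exact hA.monoidAlgebra_of_mulArchimedean _ hx2 hx3

theorem monoidAlgebra {M : Type*} [CommMonoid M] [IsCancelMul M] [IsMulTorsionFree M]
    (hA : A.IsSubintegrallyClosedIn) : (A.monoidAlgebra M).IsSubintegrallyClosedIn := by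
  intro x hx2 hx3
  let N := Submonoid.closure (x.coeff.support : Set M)
  have : Monoid.FG N := (Monoid.fg_iff_submonoid_fg N).mpr ⟨_, rfl⟩
  have : IsMulTorsionFree N := Subtype.val_injective.isMulTorsionFree N.subtype
  obtain ⟨y, hy⟩ : ∃ y : MonoidAlgebra B N, mapDomainRingHom B N.subtype y = x :=
    ⟨comapDomain _ Subtype.val_injective x, mapDomain_comapDomain
      (by rw [N.coe_subtype, Subtype.range_coe]; exact Submonoid.subset_closure) _⟩
  have hmap (z : MonoidAlgebra B N) :
      mapDomainRingHom B N.subtype z ∈ A.monoidAlgebra M ↔ z ∈ A.monoidAlgebra N :=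
    mapDomain_mem_monoidAlgebra_iff Subtype.val_injective.injOn
  rw [← hy, ← map_pow, hmap] at hx2 hx3
  rw [← hy, hmap]
  exact hA.monoidAlgebra_of_fg y hx2 hx3

end IsSubintegrallyClosedIn

end Subring

theorem monoidAlgebraSubring_top {B : Type*} [CommRing B] (A : Subring B) (M : Type*)
    [CommMonoid M] : monoidAlgebraSubring A (⊤ : Submonoid M) = A.monoidAlgebra M := by
  refine le_antisymm (Subring.closure_le.mpr ?_) fun x hx => ?_
  · rintro _ ⟨a, ha, m, -, rfl⟩
    exact ⟨single m ⟨a, ha⟩, mapRingHom_single ..⟩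
  · obtain ⟨y, rfl⟩ := hx
    induction y using MonoidAlgebra.induction_linear with
    | zero => rw [map_zero]; exact zero_mem _
    | add y z hy hz => rw [map_add]; exact add_mem hy hz
    | single m a =>
      rw [mapRingHom_single]
      exact Subring.subset_closure ⟨a, a.2, m, trivial, rfl⟩

theorem monoidAlgebra_subintegrallyClosed_general
    {B : Type*} [CommRing B] (A : Subring B)
    {M : Type*} [CancelCommMonoid M]
    (htf : MulTorsionFree M)
    (hA : A.IsSubintegrallyClosedIn) :
    (monoidAlgebraSubring A (⊤ : Submonoid M)).IsSubintegrallyClosedIn := by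
  have : IsMulTorsionFree M := ⟨fun n hn x y h => htf x y n hn h⟩
  rw [monoidAlgebraSubring_top]
  exact hA.monoidAlgebra

/-- **Sarwar, Remark 3.4.**  Let `A ⊆ B` be an extension of commutative rings and `M` a
positive commutative cancellative torsion-free monoid (not necessarily finitely generated).
If `A` is subintegrally closed in `B`, then `A[M]` is subintegrally closed in `B[M]`. -/
theorem monoidAlgebra_subintegrallyClosed
    {B : Type*} [CommRing B] (A : Subring B)
    {M : Type*} [CancelCommMonoid M]
    (htf : MulTorsionFree M) (hpos : IsPositiveMonoid M)
    (hA : A.IsSubintegrallyClosedIn) :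
    (monoidAlgebraSubring A (⊤ : Submonoid M)).IsSubintegrallyClosedIn :=
  monoidAlgebra_subintegrallyClosed_general A htf hA
end
end

section
/- Let A ⊆ B be an extension of commutative rings and let g ∈ B satisfy g² ∈ A and g³ ∈ A. Let I be the A-submodule of B generated by {g², 1 + g + g²} and J the A-submodule of B generated by {g², 1 − g + g²}. Then IJ = A; in particular, I is an invertible A-submodule of B, i.e., I ∈ 𝓘(A,B). -/
open scoped Classical

noncomputable section

namespace Submodule

theorem span_mul_span_eq_one_of_forall_mul_mem {R A : Type*} [CommSemiring R] [Semiring A]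
    [Algebra R A] {s t : Set A} (hmul : ∀ x ∈ s, ∀ y ∈ t, x * y ∈ (1 : Submodule R A))
    (hone : (1 : A) ∈ span R s * span R t) : span R s * span R t = 1 := by
  refine le_antisymm ?_ (one_le.mpr hone)
  rw [span_mul_span, span_le]
  rintro _ ⟨x, hx, y, hy, rfl⟩
  exact hmul x hx y hy

end Submodule

theorem Subring.mem_one_submodule {B : Type*} [CommRing B] {A : Subring B} {x : B}
    (hx : x ∈ A) : x ∈ (1 : Submodule A B) :=
  Submodule.mem_one.mpr ⟨⟨x, hx⟩, rfl⟩

section SqCubeMem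

variable {B : Type*} [CommRing B] {A : Subring B} {g : B}

theorem pow_four_mem_of_sq_mem (h2 : g ^ 2 ∈ A) : g ^ 4 ∈ A := by
  simpa only [← pow_add] using mul_mem h2 h2

theorem mul_mem_of_sq_cube_mem (h2 : g ^ 2 ∈ A) (h3 : g ^ 3 ∈ A) :
    ∀ x ∈ ({g ^ 2, 1 + g + g ^ 2} : Set B), ∀ y ∈ ({g ^ 2, 1 - g + g ^ 2} : Set B),
      x * y ∈ A := by
  have h4 := pow_four_mem_of_sq_mem h2
  rintro x (rfl | rfl) y (rfl | rfl)
  · simpa only [← pow_add] using h4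
  · rw [show g ^ 2 * (1 - g + g ^ 2) = g ^ 2 - g ^ 3 + g ^ 4 by ring]
    exact add_mem (sub_mem h2 h3) h4
  · rw [show (1 + g + g ^ 2) * g ^ 2 = g ^ 2 + g ^ 3 + g ^ 4 by ring]
    exact add_mem (add_mem h2 h3) h4
  · rw [show (1 + g + g ^ 2) * (1 - g + g ^ 2) = 1 + g ^ 2 + g ^ 4 by ring]
    exact add_mem (add_mem (one_mem A) h2) h4

-- `(1 + g + g²)(1 - g + g²) = 1 + g² + g⁴`, so `(1 - g²)(1 + g² + g⁴) + g² · g⁴ = 1`.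
theorem one_mem_span_mul_span_of_sq_mem (h2 : g ^ 2 ∈ A) :
    (1 : B) ∈ Submodule.span A ({g ^ 2, 1 + g + g ^ 2} : Set B) *
      Submodule.span A ({g ^ 2, 1 - g + g ^ 2} : Set B) := by
  have hsq := Submodule.mul_mem_mul (R := A)
    (Submodule.subset_span (Set.mem_insert (g ^ 2) {1 + g + g ^ 2}))
    (Submodule.subset_span (Set.mem_insert (g ^ 2) {1 - g + g ^ 2}))
  have hprod := Submodule.mul_mem_mul (R := A)
    (Submodule.subset_span (Set.mem_insert_of_mem (g ^ 2) (Set.mem_singleton (1 + g + g ^ 2))))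
    (Submodule.subset_span (Set.mem_insert_of_mem (g ^ 2) (Set.mem_singleton (1 - g + g ^ 2))))
  convert add_mem (Submodule.smul_mem _ (⟨1 - g ^ 2, sub_mem (one_mem A) h2⟩ : A) hprod)
    (Submodule.smul_mem _ (⟨g ^ 2, h2⟩ : A) hsq) using 1
  change (1 : B) = (1 - g ^ 2) * ((1 + g + g ^ 2) * (1 - g + g ^ 2)) + g ^ 2 * (g ^ 2 * g ^ 2)
  ring

end SqCubeMem

/-- **Sarwar, proof of Theorem 1.2(d)(ii).**  Let `A ⊆ B` be an extension of commutative
rings and `g ∈ B` with `g² ∈ A` and `g³ ∈ A`.  Then the `A`-submodules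
`I = (g², 1 + g + g²)` and `J = (g², 1 - g + g²)` of `B` satisfy `I·J = A`; in particular
`I` is an invertible `A`-submodule of `B`, i.e. `I ∈ 𝓘(A,B)`. -/
theorem span_mul_span_eq_one_of_sq_cube_mem
    {B : Type*} [CommRing B] (A : Subring B) (g : B)
    (h2 : g ^ 2 ∈ A) (h3 : g ^ 3 ∈ A) :
    Submodule.span A ({g ^ 2, 1 + g + g ^ 2} : Set B) *
        Submodule.span A ({g ^ 2, 1 - g + g ^ 2} : Set B) = 1 ∧
      IsUnit (Submodule.span A ({g ^ 2, 1 + g + g ^ 2} : Set B)) := by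
  have key := Submodule.span_mul_span_eq_one_of_forall_mul_mem
    (fun x hx y hy => Subring.mem_one_submodule (mul_mem_of_sq_cube_mem h2 h3 x hx y hy))
    (one_mem_span_mul_span_of_sq_mem h2)
  exact ⟨key, IsUnit.of_mul_eq_one _ key⟩
end
end

section
/- Let A ⊆ B be an extension of commutative rings and M ⊆ N an extension of commutative cancellative torsion-free monoids. Let b ∈ B with b² ∈ A and b³ ∈ A, and let m ∈ M. In the monoid algebra B[N], let I be the A[M]-submodule generated by {b², 1 − b·m} and J the A[M]-submodule generated by {b², 1 + b·m}, where b·m denotes the product of b with the basis element of B[N] corresponding to m. Then IJ = A[M]; in particular, I is an invertible A[M]-submodule of B[N], i.e., I ∈ 𝓘(A[M],B[N]). -/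
open scoped Classical

noncomputable section

open scoped Pointwise

namespace Submodule

theorem mul_mem_of_mem_one {R S : Type*} [CommSemiring R] [Semiring S] [Algebra R S]
    {P : Submodule R S} {c p : S} (hc : c ∈ (1 : Submodule R S)) (hp : p ∈ P) : c * p ∈ P := by
  simpa only [Submodule.one_mul] using mul_mem_mul hc hp

/- With `x² = s g`, the element `x⁶ = x² s² g²` lies in `(g, 1 - x)(g, 1 + x)`, and so does
`1 - x³ = (1 - x)(1 + x) + s (1 - x) g`; hence so does `1 = (1 + x³)(1 - x³) + x⁶`. -/
theorem span_pair_mul_span_pair_eq_one {R S : Type*} [CommRing R] [CommRing S] [Algebra R S]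
    {g x s : S} (hg : g ∈ (1 : Submodule R S)) (hgx : g * x ∈ (1 : Submodule R S))
    (hxx : x * x ∈ (1 : Submodule R S)) (hs : s ∈ (1 : Submodule R S)) (hsg : s * g = x * x) :
    span R {g, 1 - x} * span R {g, 1 + x} = 1 := by
  have one_mem : (1 : S) ∈ (1 : Submodule R S) := one_le.mp le_rfl
  rw [span_mul_span]
  apply le_antisymm
  · rw [span_le]
    rintro _ ⟨y, hy, z, hz, rfl⟩
    change y * z ∈ (1 : Submodule R S)
    rcases hy with rfl | rfl <;> rcases hz with rfl | rfl
    · exact mul_mem_of_mem_one hg hg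
    · rw [mul_add, mul_one]
      exact add_mem hg hgx
    · rw [sub_mul, one_mul, mul_comm x]
      exact sub_mem hg hgx
    · rw [show (1 - x) * (1 + x) = 1 - x * x by ring]
      exact sub_mem one_mem hxx
  · have mem_span : ∀ y ∈ ({g, 1 - x} : Set S), ∀ z ∈ ({g, 1 + x} : Set S),
        y * z ∈ span R (({g, 1 - x} : Set S) * {g, 1 + x}) :=
      fun y hy z hz => subset_span (Set.mul_mem_mul hy hz)
    have hc : 1 + s * (g * x) ∈ (1 : Submodule R S) := add_mem one_mem (mul_mem_of_mem_one hs hgx)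
    rw [one_le]
    convert add_mem (add_mem
      (mul_mem_of_mem_one hc (mem_span (1 - x) (by simp) (1 + x) (by simp)))
      (mul_mem_of_mem_one (mul_mem_of_mem_one hc hs) (mem_span (1 - x) (by simp) g (by simp))))
      (mul_mem_of_mem_one (mul_mem_of_mem_one hxx (mul_mem_of_mem_one hs hs))
        (mem_span g (by simp) g (by simp))) using 1
    linear_combination -(x * s * g + 1) * hsg

end Submodule

theorem single_mem_one_submodule_monoidAlgebraSubring {B : Type*} [CommRing B] {N : Type*}
    [CommMonoid N] {A : Subring B} {M : Submonoid N} {a : B} {k : N} (ha : a ∈ A) (hk : k ∈ M) :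
    MonoidAlgebra.single k a ∈ (1 : Submodule (monoidAlgebraSubring A M) (MonoidAlgebra B N)) :=
  Submodule.mem_one.mpr ⟨⟨_, Subring.subset_closure ⟨a, ha, k, hk, rfl⟩⟩, rfl⟩

theorem span_mul_span_eq_one_monoidAlgebra_general
    {B : Type*} [CommRing B] (A : Subring B)
    {N : Type*} [CancelCommMonoid N] (M : Submonoid N)
    (b : B) (hb2 : b ^ 2 ∈ A) (hb3 : b ^ 3 ∈ A) (m : N) (hm : m ∈ M) :
    Submodule.span (monoidAlgebraSubring A M)
          ({MonoidAlgebra.single 1 (b ^ 2), 1 - MonoidAlgebra.single m b} :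
            Set (MonoidAlgebra B N)) *
        Submodule.span (monoidAlgebraSubring A M)
          ({MonoidAlgebra.single 1 (b ^ 2), 1 + MonoidAlgebra.single m b} :
            Set (MonoidAlgebra B N)) = 1 ∧
      IsUnit (Submodule.span (monoidAlgebraSubring A M)
        ({MonoidAlgebra.single 1 (b ^ 2), 1 - MonoidAlgebra.single m b} :
          Set (MonoidAlgebra B N))) := by
  have h := Submodule.span_pair_mul_span_pair_eq_one (s := MonoidAlgebra.single (m ^ 2) 1)
    (single_mem_one_submodule_monoidAlgebraSubring hb2 (one_mem M))
    (by
      rw [MonoidAlgebra.single_mul_single, one_mul, ← pow_succ]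
      exact single_mem_one_submodule_monoidAlgebraSubring hb3 hm)
    (by
      rw [MonoidAlgebra.single_mul_single, ← sq, ← sq]
      exact single_mem_one_submodule_monoidAlgebraSubring hb2 (pow_mem hm 2))
    (single_mem_one_submodule_monoidAlgebraSubring (one_mem A) (pow_mem hm 2))
    (by simp only [MonoidAlgebra.single_mul_single, mul_one, one_mul, sq])
  exact ⟨h, IsUnit.of_mul_eq_one _ h⟩

/-- **Sarwar, proof of Theorem 1.2(d)(i).**  Let `A ⊆ B` be an extension of commutative rings
and `M ⊆ N` an extension of commutative cancellative torsion-free monoids.  Let `b ∈ B` with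
`b² ∈ A` and `b³ ∈ A`, and let `m ∈ M`.  Then the `A[M]`-submodules `I = (b², 1 - b·m)` and
`J = (b², 1 + b·m)` of `B[N]` satisfy `I·J = A[M]`; in particular `I` is an invertible
`A[M]`-submodule of `B[N]`, i.e. `I ∈ 𝓘(A[M],B[N])`. -/
theorem span_mul_span_eq_one_monoidAlgebra
    {B : Type*} [CommRing B] (A : Subring B)
    {N : Type*} [CancelCommMonoid N] (htf : MulTorsionFree N) (M : Submonoid N)
    (b : B) (hb2 : b ^ 2 ∈ A) (hb3 : b ^ 3 ∈ A) (m : N) (hm : m ∈ M) :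
    Submodule.span (monoidAlgebraSubring A M)
          ({MonoidAlgebra.single 1 (b ^ 2), 1 - MonoidAlgebra.single m b} :
            Set (MonoidAlgebra B N)) *
        Submodule.span (monoidAlgebraSubring A M)
          ({MonoidAlgebra.single 1 (b ^ 2), 1 + MonoidAlgebra.single m b} :
            Set (MonoidAlgebra B N)) = 1 ∧
      IsUnit (Submodule.span (monoidAlgebraSubring A M)
        ({MonoidAlgebra.single 1 (b ^ 2), 1 - MonoidAlgebra.single m b} :
          Set (MonoidAlgebra B N))) :=
  span_mul_span_eq_one_monoidAlgebra_general A M b hb2 hb3 m hm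
end
end
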